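/- arXiv:2105.06459 — 4 statements merged into one kernel-verified Lean document; each statement's English description precedes it below -/
import Mathlib

section
/- Let r ≥ 2, N = r − 1, d = 2r − 2, and let w = (w_1,…,w_r) satisfy w_1 > w_2 > ⋯ > w_r > 0 and Σ_k w_k = 1. Define the breakaway lineup ℓ_b = (χ([N−1] ∪ {N+i−1}))_{i=1}^r and the peloton lineup ℓ_p = (χ([N+1] ∖ {N+2−i}))_{i=1}^r. Then ℓ_b and ℓ_p are fundamental lineups of length r of the fermionic point configuration, and: (a) if ℓ is any fundamental lineup of length r whose occupation vector o_w(ℓ) = Σ_{j=1}^r w_j χ(S_j) has nonzero d-th coordinate, then o_w(ℓ) = o_w(ℓ_b); (b) if ℓ is any fundamental lineup of length r whose occupation vector has first coordinate strictly less than 1, then o_w(ℓ) = o_w(ℓ_p). -/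
noncomputable section

/-- Euclidean inner product on `Fin d → ℝ`. -/
def dotp {d : ℕ} (y x : Fin d → ℝ) : ℝ := ∑ i, y i * x i

/-- Characteristic vector of a subset of `Fin d`. -/
def chiF {d : ℕ} (S : Finset (Fin d)) : Fin d → ℝ := fun i => if i ∈ S then 1 else 0

/-- `y` is a fundamental vector: its coordinates are weakly decreasing. -/
def Fund {d : ℕ} (y : Fin d → ℝ) : Prop := ∀ i j : Fin d, i ≤ j → y j ≤ y i

/-- `(χ(S 0),…,χ(S (r-1)))` is a fundamental lineup of length `r` of the
fermionic point configuration of `N`-subsets of `[d]`. -/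
def IsFundFermionicLineup (d N : ℕ) {r : ℕ} (S : Fin r → Finset (Fin d)) : Prop :=
  Function.Injective S ∧ (∀ k, (S k).card = N) ∧
  ∃ y : Fin d → ℝ, Fund y ∧
    (∀ k l : Fin r, k < l → dotp y (chiF (S l)) < dotp y (chiF (S k))) ∧
    (∀ T : Finset (Fin d), T.card = N → (∀ k, T ≠ S k) →
      ∀ k, dotp y (chiF T) < dotp y (chiF (S k)))

/-- The occupation vector of a tuple of subsets with respect to the weights `w`. -/
def occVec {d r : ℕ} (w : Fin r → ℝ) (S : Fin r → Finset (Fin d)) : Fin d → ℝ :=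
  fun i => ∑ j, w j * chiF (S j) i

/-- The breakaway lineup `(χ([N-1] ∪ {N+i-1}))_{i=1}^r` for `N = r-1`,
`d = 2r-2`, written with `Fin (2r-2)` identified with `{1,…,2r-2}` via
`j ↦ (j : ℕ) + 1`. -/
def breakaway (r : ℕ) : Fin r → Finset (Fin (2 * r - 2)) := fun k =>
  Finset.univ.filter fun j => (j : ℕ) < r - 2 ∨ (j : ℕ) = r - 2 + (k : ℕ)

/-- The peloton lineup `(χ([N+1] ∖ {N+2-i}))_{i=1}^r` for `N = r-1`, `d = 2r-2`. -/
def peloton (r : ℕ) : Fin r → Finset (Fin (2 * r - 2)) := fun k =>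
  Finset.univ.filter fun j => (j : ℕ) ≤ r - 1 ∧ (j : ℕ) ≠ r - 1 - (k : ℕ)

lemma dotp_chi {d : ℕ} (y : Fin d → ℝ) (S : Finset (Fin d)) :
    dotp y (chiF S) = ∑ i ∈ S, y i := by
  simp only [dotp, chiF, mul_ite, mul_one, mul_zero]
  rw [Finset.sum_ite_mem, Finset.univ_inter]

lemma card_eq_of_image_val {n : ℕ} {A : Finset (Fin n)} {B : Finset ℕ}
    (h : ∀ a : ℕ, a ∈ B ↔ ∃ i : Fin n, i ∈ A ∧ (i : ℕ) = a) : A.card = B.card := by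
  rw [← Finset.card_image_of_injective A Fin.val_injective]
  congr 1
  ext a
  rw [Finset.mem_image]
  constructor
  · rintro ⟨i, hi, rfl⟩; exact (h _).mpr ⟨i, hi, rfl⟩
  · intro ha; obtain ⟨i, hi, rfl⟩ := (h a).mp ha; exact ⟨i, hi, rfl⟩

lemma cnt_le_succ {n m : ℕ} (A : Finset (Fin n)) :
    (A.filter fun i => i.val ≤ m).card ≤ m + 1 := by
  rw [← Finset.card_image_of_injective _ Fin.val_injective]
  have hsub : (A.filter fun i => i.val ≤ m).image Fin.val ⊆ Finset.range (m + 1) := by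
    intro a ha
    simp only [Finset.mem_image, Finset.mem_filter] at ha
    obtain ⟨i, ⟨_, hi⟩, rfl⟩ := ha
    simp only [Finset.mem_range]
    omega
  exact le_trans (Finset.card_le_card hsub) (by simp)

lemma dotp_dom_le {d : ℕ} (hd : 0 < d) {y : Fin d → ℝ} (hy : Fund y)
    {T S : Finset (Fin d)} (hc : T.card = S.card)
    (hdom : ∀ m : ℕ, (T.filter fun i => i.val ≤ m).card ≤ (S.filter fun i => i.val ≤ m).card) :
    dotp y (chiF T) ≤ dotp y (chiF S) := by
  set Y : ℕ → ℝ := fun m => y ⟨min m (d - 1), by omega⟩ with hY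
  have hYy : ∀ i : Fin d, y i = Y i.val := by
    intro i
    simp only [hY]
    congr 1
    exact Fin.ext (by simp; omega)
  have hYanti : ∀ a b : ℕ, a ≤ b → Y b ≤ Y a := by
    intro a b hab
    exact hy ⟨min a (d-1), by omega⟩ ⟨min b (d-1), by omega⟩ (by simp [Fin.le_def]; omega)
  have key : ∀ A : Finset (Fin d), ∑ i ∈ A, y i
      = A.card * Y (d - 1)
        + ∑ m ∈ Finset.range (d - 1),
            (Y m - Y (m + 1)) * (A.filter fun i => i.val ≤ m).card := by
    intro A
    have h1 : ∀ i : Fin d, y i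
        = Y (d - 1) + ∑ m ∈ Finset.range (d - 1),
            (if i.val ≤ m then (Y m - Y (m + 1)) else 0) := by
      intro i
      have hfil : (Finset.range (d - 1)).filter (fun m => i.val ≤ m)
          = Finset.Ico i.val (d - 1) := by
        ext a
        simp only [Finset.mem_filter, Finset.mem_range, Finset.mem_Ico]
        omega
      have htel : ∑ m ∈ Finset.Ico i.val (d - 1), (Y m - Y (m + 1))
          = Y i.val - Y (d - 1) := by
        rw [Finset.sum_Ico_eq_sum_range]
        have h2 := Finset.sum_range_sub' (fun k => Y (i.val + k)) (d - 1 - i.val)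
        have h2' : ∑ k ∈ Finset.range (d - 1 - i.val), (Y (i.val + k) - Y (i.val + k + 1))
            = Y (i.val + 0) - Y (i.val + (d - 1 - i.val)) := by
          rw [← h2]
          apply Finset.sum_congr rfl
          intro k _
          rfl
        rw [h2']
        have h3 : i.val + (d - 1 - i.val) = d - 1 := by omega
        rw [h3, add_zero]
      rw [← Finset.sum_filter, hfil, htel, hYy i]
      ring
    calc ∑ i ∈ A, y i
        = ∑ i ∈ A, (Y (d - 1) + ∑ m ∈ Finset.range (d - 1),
            (if i.val ≤ m then (Y m - Y (m + 1)) else 0)) :=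
          Finset.sum_congr rfl (fun i _ => h1 i)
      _ = A.card * Y (d - 1) + ∑ i ∈ A, ∑ m ∈ Finset.range (d - 1),
            (if i.val ≤ m then (Y m - Y (m + 1)) else 0) := by
          rw [Finset.sum_add_distrib, Finset.sum_const, nsmul_eq_mul]
      _ = A.card * Y (d - 1) + ∑ m ∈ Finset.range (d - 1), ∑ i ∈ A,
            (if i.val ≤ m then (Y m - Y (m + 1)) else 0) := by
          rw [Finset.sum_comm]
      _ = A.card * Y (d - 1) + ∑ m ∈ Finset.range (d - 1),
            (Y m - Y (m + 1)) * (A.filter fun i => i.val ≤ m).card := by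
          congr 1
          apply Finset.sum_congr rfl
          intro m _
          rw [← Finset.sum_filter, Finset.sum_const, nsmul_eq_mul, mul_comm]
  rw [dotp_chi, dotp_chi, key T, key S, hc]
  refine add_le_add le_rfl ?_
  apply Finset.sum_le_sum
  intro m _
  have h4 : Y (m + 1) ≤ Y m := hYanti m (m + 1) (by omega)
  have h5 : ((T.filter fun i => i.val ≤ m).card : ℝ)
      ≤ ((S.filter fun i => i.val ≤ m).card : ℝ) := by exact_mod_cast hdom m
  have h6 : (0:ℝ) ≤ Y m - Y (m + 1) := by linarith
  exact mul_le_mul_of_nonneg_left h5 h6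

lemma lineup_eq {d N r : ℕ} (hd : 0 < d) {S B : Fin r → Finset (Fin d)}
    (hS : IsFundFermionicLineup d N S)
    (hBinj : Function.Injective B) (hBcard : ∀ k, (B k).card = N) (j : Fin r)
    (hdom : ∀ k : Fin r, ∀ m : ℕ,
      ((S j).filter fun i => i.val ≤ m).card ≤ ((B k).filter fun i => i.val ≤ m).card)
    (hchain : ∀ k l : Fin r, k ≤ l → ∀ m : ℕ,
      ((B l).filter fun i => i.val ≤ m).card ≤ ((B k).filter fun i => i.val ≤ m).card) :
    S = B := by
  obtain ⟨hinj, hcard, y, hy, hord, hout⟩ := hS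
  have hmem : ∀ k, ∃ a, S a = B k := by
    intro k
    by_contra h
    push_neg at h
    have h1 : dotp y (chiF (B k)) < dotp y (chiF (S j)) :=
      hout (B k) (hBcard k) (fun a ha => h a ha.symm) j
    have h2 : dotp y (chiF (S j)) ≤ dotp y (chiF (B k)) :=
      dotp_dom_le hd hy (by rw [hcard j, hBcard k]) (hdom k)
    linarith
  choose σ hσ using hmem
  have hσinj : Function.Injective σ := by
    intro k l h
    apply hBinj
    rw [← hσ k, ← hσ l, h]
  have hmono : StrictMono σ := by
    intro k l hkl
    rcases lt_trichotomy (σ k) (σ l) with h | h | h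
    · exact h
    · exact absurd (hσinj h) (ne_of_lt hkl)
    · exfalso
      have h1 : dotp y (chiF (S (σ k))) < dotp y (chiF (S (σ l))) := hord _ _ h
      have h2 : dotp y (chiF (B l)) ≤ dotp y (chiF (B k)) :=
        dotp_dom_le hd hy (by rw [hBcard, hBcard]) (hchain k l hkl.le)
      rw [hσ k, hσ l] at h1
      linarith
  have hσid : σ = id := by
    refine (hmono.range_inj strictMono_id).1 ?_
    rw [Set.range_id]
    exact (Finite.surjective_of_injective hσinj).range_eq
  funext k
  rw [← hσ k, hσid]
  rfl

section BP

variable {r : ℕ} (hr : 2 ≤ r)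

include hr

lemma breakaway_card (k : Fin r) : (breakaway r k).card = r - 1 := by
  have hk := k.isLt
  rw [card_eq_of_image_val (B := insert (r - 2 + (k : ℕ)) (Finset.range (r - 2))) ?_]
  · rw [Finset.card_insert_of_notMem (by simp), Finset.card_range]
    omega
  · intro a
    simp only [Finset.mem_insert, Finset.mem_range, breakaway, Finset.mem_filter,
      Finset.mem_univ, true_and]
    constructor
    · intro ha
      exact ⟨⟨a, by omega⟩, by simp; omega, rfl⟩
    · rintro ⟨i, hi, rfl⟩
      omega

lemma breakaway_inj : Function.Injective (breakaway r) := by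
  intro k l h
  have hk := k.isLt
  have hl := l.isLt
  have h1 : (⟨r - 2 + (k : ℕ), by omega⟩ : Fin (2 * r - 2)) ∈ breakaway r l := by
    rw [← h]
    simp [breakaway]
  simp only [breakaway, Finset.mem_filter, Finset.mem_univ, true_and] at h1
  exact Fin.ext (by omega)

lemma breakaway_filter (k : Fin r) (m : ℕ) :
    ((breakaway r k).filter fun i => i.val ≤ m).card
      = min (r - 2) (m + 1) + (if r - 2 + (k : ℕ) ≤ m then 1 else 0) := by
  have hk := k.isLt
  by_cases h : r - 2 + (k : ℕ) ≤ m
  · rw [card_eq_of_image_val (B := insert (r - 2 + (k : ℕ)) (Finset.range (r - 2))) ?_]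
    · rw [Finset.card_insert_of_notMem (by simp), Finset.card_range]
      rw [if_pos h]
      omega
    · intro a
      simp only [Finset.mem_insert, Finset.mem_range, breakaway, Finset.mem_filter,
        Finset.mem_univ, true_and]
      constructor
      · intro ha
        exact ⟨⟨a, by omega⟩, by simp; omega, rfl⟩
      · rintro ⟨i, ⟨hi1, hi2⟩, rfl⟩
        omega
  · rw [card_eq_of_image_val (B := Finset.range (min (r - 2) (m + 1))) ?_]
    · rw [Finset.card_range, if_neg h]
      omega
    · intro a
      simp only [Finset.mem_range, breakaway, Finset.mem_filter,
        Finset.mem_univ, true_and]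
      constructor
      · intro ha
        exact ⟨⟨a, by omega⟩, by simp; omega, rfl⟩
      · rintro ⟨i, ⟨hi1, hi2⟩, rfl⟩
        omega

end BP

section BP2

variable {r : ℕ} (hr : 2 ≤ r)

include hr

lemma peloton_filter (k : Fin r) (m : ℕ) :
    ((peloton r k).filter fun i => i.val ≤ m).card
      = min r (m + 1) - (if r - 1 - (k : ℕ) ≤ m then 1 else 0) := by
  have hk := k.isLt
  by_cases h : r - 1 - (k : ℕ) ≤ m
  · rw [card_eq_of_image_val (B := (Finset.range (min r (m + 1))).erase (r - 1 - (k : ℕ))) ?_]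
    · rw [Finset.card_erase_of_mem (by simp only [Finset.mem_range]; omega), Finset.card_range]
      rw [if_pos h]
    · intro a
      simp only [Finset.mem_erase, Finset.mem_range, peloton, Finset.mem_filter,
        Finset.mem_univ, true_and]
      constructor
      · intro ha
        exact ⟨⟨a, by omega⟩, ⟨by simp; omega, by simp; omega⟩, rfl⟩
      · rintro ⟨i, ⟨⟨hi1, hi2⟩, hi3⟩, rfl⟩
        omega
  · rw [card_eq_of_image_val (B := Finset.range (min r (m + 1))) ?_]
    · rw [Finset.card_range, if_neg h]
      omega
    · intro a
      simp only [Finset.mem_range, peloton, Finset.mem_filter,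
        Finset.mem_univ, true_and]
      constructor
      · intro ha
        exact ⟨⟨a, by omega⟩, ⟨by simp; omega, by simp; omega⟩, rfl⟩
      · rintro ⟨i, ⟨⟨hi1, hi2⟩, hi3⟩, rfl⟩
        omega

lemma U_card : (Finset.univ.filter fun i : Fin (2 * r - 2) => i.val < r).card = r := by
  rw [card_eq_of_image_val (B := Finset.range r) ?_]
  · exact Finset.card_range r
  · intro a
    simp only [Finset.mem_range, Finset.mem_filter, Finset.mem_univ, true_and]
    constructor
    · intro ha
      exact ⟨⟨a, by omega⟩, by simp; omega, rfl⟩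
    · rintro ⟨i, hi, rfl⟩
      exact hi

lemma L_card : (Finset.univ.filter fun i : Fin (2 * r - 2) => i.val < r - 2).card = r - 2 := by
  rw [card_eq_of_image_val (B := Finset.range (r - 2)) ?_]
  · exact Finset.card_range _
  · intro a
    simp only [Finset.mem_range, Finset.mem_filter, Finset.mem_univ, true_and]
    constructor
    · intro ha
      exact ⟨⟨a, by omega⟩, by simp; omega, rfl⟩
    · rintro ⟨i, hi, rfl⟩
      exact hi

lemma peloton_eq_erase (k : Fin r) :
    peloton r k = (Finset.univ.filter fun i : Fin (2 * r - 2) => i.val < r).erase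
      ⟨r - 1 - (k : ℕ), by omega⟩ := by
  have hk := k.isLt
  ext i
  simp only [peloton, Finset.mem_filter, Finset.mem_univ, true_and, Finset.mem_erase,
    Fin.ext_iff, Fin.val_mk, ne_eq]
  omega

lemma peloton_card (k : Fin r) : (peloton r k).card = r - 1 := by
  rw [peloton_eq_erase hr k, Finset.card_erase_of_mem (by simp; omega), U_card hr]

lemma peloton_inj : Function.Injective (peloton r) := by
  intro k l h
  have hk := k.isLt
  have hl := l.isLt
  have h1 : (⟨r - 1 - (k : ℕ), by omega⟩ : Fin (2 * r - 2)) = ⟨r - 1 - (l : ℕ), by omega⟩ := by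
    by_contra hne
    have h2 : (⟨r - 1 - (k : ℕ), by omega⟩ : Fin (2 * r - 2)) ∈ peloton r l := by
      rw [peloton_eq_erase hr l]
      exact Finset.mem_erase.mpr ⟨hne, by simp; omega⟩
    rw [← h, peloton_eq_erase hr k] at h2
    exact (Finset.mem_erase.mp h2).1 rfl
  have h2 : r - 1 - (k : ℕ) = r - 1 - (l : ℕ) := by simpa using h1
  exact Fin.ext (by omega)

end BP2

section Lineups

variable {r : ℕ} (hr : 2 ≤ r)

include hr

lemma breakaway_insert (k : Fin r) :
    breakaway r k = insert (⟨r - 2 + (k : ℕ), by have := k.isLt; omega⟩ : Fin (2 * r - 2))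
      (Finset.univ.filter fun i : Fin (2 * r - 2) => i.val < r - 2) := by
  have hk := k.isLt
  ext i
  simp only [breakaway, Finset.mem_filter, Finset.mem_univ, true_and, Finset.mem_insert,
    Fin.ext_iff, Fin.val_mk]
  omega

lemma dotp_breakaway (k : Fin r) :
    dotp (fun i : Fin (2 * r - 2) => if i.val < r - 2 then (0:ℝ) else -((i.val : ℝ) + 2))
      (chiF (breakaway r k)) = -(((r - 2 + (k : ℕ) : ℕ) : ℝ) + 2) := by
  have hk := k.isLt
  rw [dotp_chi, breakaway_insert hr k, Finset.sum_insert (by simp)]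
  have h0 : ∑ i ∈ (Finset.univ.filter fun i : Fin (2 * r - 2) => i.val < r - 2),
      (if i.val < r - 2 then (0:ℝ) else -((i.val : ℝ) + 2)) = 0 := by
    apply Finset.sum_eq_zero
    intro i hi
    simp only [Finset.mem_filter] at hi
    rw [if_pos hi.2]
  rw [h0, add_zero, if_neg (by simp)]

lemma breakaway_lineup : IsFundFermionicLineup (2 * r - 2) (r - 1) (breakaway r) := by
  set y : Fin (2 * r - 2) → ℝ :=
    fun i => if i.val < r - 2 then (0:ℝ) else -((i.val : ℝ) + 2) with hy
  refine ⟨breakaway_inj hr, breakaway_card hr, y, ?_, ?_, ?_⟩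
  · -- Fund
    intro i j hij
    rw [Fin.le_def] at hij
    simp only [hy]
    split_ifs with h1 h2 h2
    · exact le_refl 0
    · exact absurd rfl (by omega : ¬ (0:ℕ) = 0)
    · have : (0:ℝ) ≤ (j.val : ℝ) + 2 := by positivity
      linarith
    · have : ((i.val : ℕ) : ℝ) ≤ ((j.val : ℕ) : ℝ) := Nat.cast_le.mpr hij
      linarith
  · -- ordering
    intro k l hkl
    rw [dotp_breakaway hr k, dotp_breakaway hr l]
    have h1 : r - 2 + (k : ℕ) < r - 2 + (l : ℕ) := by
      have := (Fin.lt_def).mp hkl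
      omega
    have h2 : ((r - 2 + (k : ℕ) : ℕ) : ℝ) < ((r - 2 + (l : ℕ) : ℕ) : ℝ) := Nat.cast_lt.mpr h1
    linarith
  · -- outside
    intro T hT hTne k
    have hk := k.isLt
    rw [dotp_breakaway hr k, dotp_chi]
    set L : Finset (Fin (2 * r - 2)) :=
      Finset.univ.filter (fun i : Fin (2 * r - 2) => i.val < r - 2) with hL
    have hsplit := Finset.card_filter_add_card_filter_not
      (s := T) (p := fun i : Fin (2 * r - 2) => i.val < r - 2)
    have hTl : (T.filter fun i : Fin (2 * r - 2) => i.val < r - 2) ⊆ L := by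
      intro i hi
      simp only [hL, Finset.mem_filter, Finset.mem_univ, true_and]
      exact (Finset.mem_filter.mp hi).2
    have hTlcard : (T.filter fun i : Fin (2 * r - 2) => i.val < r - 2).card ≤ r - 2 :=
      le_trans (Finset.card_le_card hTl) (le_of_eq (L_card hr))
    have h2 : 2 ≤ (T.filter fun i : Fin (2 * r - 2) => ¬ i.val < r - 2).card := by
      rcases Nat.lt_or_ge (T.filter fun i : Fin (2 * r - 2) => ¬ i.val < r - 2).card 2
        with hlt | hge
      · exfalso
        have hTl2 : (T.filter fun i : Fin (2 * r - 2) => i.val < r - 2).card = r - 2 := by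
          omega
        have hTu1 : (T.filter fun i : Fin (2 * r - 2) => ¬ i.val < r - 2).card = 1 := by
          omega
        have hTlL : (T.filter fun i : Fin (2 * r - 2) => i.val < r - 2) = L :=
          Finset.eq_of_subset_of_card_le hTl (by rw [L_card hr, hTl2])
        obtain ⟨t, ht⟩ := Finset.card_eq_one.mp hTu1
        have htT : t ∈ T.filter fun i : Fin (2 * r - 2) => ¬ i.val < r - 2 := by
          rw [ht]; exact Finset.mem_singleton_self t
        have htv : r - 2 ≤ t.val := by
          have := (Finset.mem_filter.mp htT).2
          omega
        have htv2 : t.val < 2 * r - 2 := t.isLt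
        apply hTne ⟨t.val - (r - 2), by omega⟩
        have hunion := Finset.filter_union_filter_not_eq
          (fun i : Fin (2 * r - 2) => i.val < r - 2) T
        ext i
        rw [← hunion, Finset.mem_union, hTlL, ht]
        simp only [hL, Finset.mem_filter, Finset.mem_univ, true_and, Finset.mem_singleton,
          breakaway, Fin.ext_iff, Fin.val_mk]
        omega
      · exact hge
    obtain ⟨a, ha, b, hb, hab⟩ := Finset.one_lt_card.mp h2
    have haT := (Finset.mem_filter.mp ha).1
    have hbT := (Finset.mem_filter.mp hb).1
    have hav : r - 2 ≤ a.val := by have := (Finset.mem_filter.mp ha).2; omega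
    have hbv : r - 2 ≤ b.val := by have := (Finset.mem_filter.mp hb).2; omega
    have hsub : ({a, b} : Finset (Fin (2 * r - 2))) ⊆ T := by
      intro x hx
      rcases Finset.mem_insert.mp hx with rfl | hx
      · exact haT
      · rw [Finset.mem_singleton.mp hx]; exact hbT
    have hkey : ∑ i ∈ T, y i ≤ y a + y b := by
      have hdecomp := Finset.sum_sdiff (f := y) hsub
      have hnonpos : ∑ i ∈ T \ {a, b}, y i ≤ 0 := by
        apply Finset.sum_nonpos
        intro i _
        simp only [hy]
        split_ifs with h
        · exact le_refl 0
        · have : (0:ℝ) ≤ (i.val : ℝ) + 2 := by positivity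
          linarith
      rw [Finset.sum_pair hab] at hdecomp
      linarith
    have hya : y a = -((a.val : ℝ) + 2) := by simp only [hy]; rw [if_neg (by omega)]
    have hyb : y b = -((b.val : ℝ) + 2) := by simp only [hy]; rw [if_neg (by omega)]
    have hvals : a.val ≠ b.val := fun h => hab (Fin.ext h)
    have hnat : r - 2 + (k : ℕ) + 2 < a.val + 2 + (b.val + 2) := by omega
    have hcast : ((r - 2 + (k : ℕ) : ℕ) : ℝ) + 2
        < ((a.val : ℕ) : ℝ) + 2 + (((b.val : ℕ) : ℝ) + 2) := by exact_mod_cast hnat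
    rw [hya, hyb] at hkey
    linarith

end Lineups

section Lineups2

variable {r : ℕ} (hr : 2 ≤ r)

include hr

lemma yP_val (k : Fin r) :
    (fun i : Fin (2 * r - 2) => if i.val < r then (r : ℝ) - (i.val : ℝ) else -(r : ℝ))
      (⟨r - 1 - (k : ℕ), by have := k.isLt; omega⟩ : Fin (2 * r - 2)) = (k : ℕ) + 1 := by
  have hk := k.isLt
  simp only [Fin.val_mk]
  rw [if_pos (by omega)]
  have hcast : ((r - 1 - (k : ℕ) : ℕ) : ℝ) = (r : ℝ) - 1 - ((k : ℕ) : ℝ) := by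
    rw [Nat.cast_sub (by omega : (k : ℕ) ≤ r - 1), Nat.cast_sub (by omega : 1 ≤ r)]
    push_cast
    ring
  rw [hcast]
  ring

lemma dotp_peloton (k : Fin r) :
    dotp (fun i : Fin (2 * r - 2) => if i.val < r then (r : ℝ) - (i.val : ℝ) else -(r : ℝ))
      (chiF (peloton r k))
    = (∑ i ∈ (Finset.univ.filter fun i : Fin (2 * r - 2) => i.val < r),
        (if i.val < r then (r : ℝ) - (i.val : ℝ) else -(r : ℝ))) - (((k : ℕ) : ℝ) + 1) := by
  have hk := k.isLt
  rw [dotp_chi, peloton_eq_erase hr k,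
    Finset.sum_erase_eq_sub (by simp; omega)]
  congr 1
  simp only [Fin.val_mk]
  rw [if_pos (by omega)]
  have hcast : ((r - 1 - (k : ℕ) : ℕ) : ℝ) = (r : ℝ) - 1 - ((k : ℕ) : ℝ) := by
    rw [Nat.cast_sub (by omega : (k : ℕ) ≤ r - 1), Nat.cast_sub (by omega : 1 ≤ r)]
    push_cast
    ring
  rw [hcast]
  ring

lemma peloton_lineup : IsFundFermionicLineup (2 * r - 2) (r - 1) (peloton r) := by
  set y : Fin (2 * r - 2) → ℝ :=
    fun i => if i.val < r then (r : ℝ) - (i.val : ℝ) else -(r : ℝ) with hy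
  set U : Finset (Fin (2 * r - 2)) :=
    Finset.univ.filter (fun i : Fin (2 * r - 2) => i.val < r) with hU
  set C : ℝ := ∑ i ∈ U, y i with hC
  have hynn : ∀ i : Fin (2 * r - 2), i.val < r → (0:ℝ) ≤ y i ∧ y i = (r : ℝ) - (i.val : ℝ) := by
    intro i hi
    have : ((i.val : ℕ) : ℝ) ≤ ((r - 1 : ℕ) : ℝ) := Nat.cast_le.mpr (by omega)
    have hr1 : ((r - 1 : ℕ) : ℝ) = (r : ℝ) - 1 := by
      rw [Nat.cast_sub (by omega : 1 ≤ r)]; push_cast; ring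
    simp only [hy]
    rw [if_pos hi]
    constructor
    · rw [hr1] at this; linarith
    · rfl
  refine ⟨peloton_inj hr, peloton_card hr, y, ?_, ?_, ?_⟩
  · -- Fund
    intro i j hij
    rw [Fin.le_def] at hij
    simp only [hy]
    split_ifs with h1 h2 h2
    · have : ((i.val : ℕ) : ℝ) ≤ ((j.val : ℕ) : ℝ) := Nat.cast_le.mpr hij
      linarith
    · exact absurd rfl (by omega : ¬ (0:ℕ) = 0)
    · have : ((i.val : ℕ) : ℝ) < (r : ℝ) := by exact_mod_cast h2
      have : (0:ℝ) < (r:ℝ) := by positivity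
      linarith
    · exact le_refl _
  · -- ordering
    intro k l hkl
    rw [dotp_peloton hr k, dotp_peloton hr l]
    have h1 : ((k : ℕ) : ℝ) < ((l : ℕ) : ℝ) := Nat.cast_lt.mpr ((Fin.lt_def).mp hkl)
    simp only [← hy, ← hU]
    linarith
  · -- outside
    intro T hT hTne k
    have hk := k.isLt
    rw [dotp_peloton hr k, dotp_chi]
    simp only [← hy, ← hU, ← hC]
    by_cases hTU : T ⊆ U
    · exfalso
      have hUcard : U.card = r := U_card hr
      have hsd : (U \ T).card = 1 := by
        rw [Finset.card_sdiff_of_subset hTU, hUcard, hT]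
        omega
      obtain ⟨x, hx⟩ := Finset.card_eq_one.mp hsd
      have hxU : x ∈ U := by
        have : x ∈ U \ T := by rw [hx]; exact Finset.mem_singleton_self x
        exact (Finset.mem_sdiff.mp this).1
      have hxval : x.val < r := by
        simpa [hU] using hxU
      have hT' : T = U.erase x := by
        rw [Finset.erase_eq, ← hx]
        exact (Finset.sdiff_sdiff_eq_self hTU).symm
      apply hTne ⟨r - 1 - x.val, by omega⟩
      rw [hT', peloton_eq_erase hr ⟨r - 1 - x.val, by omega⟩]
      simp only [← hU]
      congr 1
      exact Fin.ext (by simp; omega)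
    · obtain ⟨t, htT, htU⟩ := Finset.not_subset.mp hTU
      have htval : r ≤ t.val := by
        by_contra hcon
        exact htU (by simp [hU]; omega)
      have hint : (T ∩ U).card ≤ r - 2 := by
        have hsub : T ∩ U ⊆ T.erase t := by
          intro i hi
          have hiT := (Finset.mem_inter.mp hi).1
          have hiU := (Finset.mem_inter.mp hi).2
          have hiv : i.val < r := by simpa [hU] using hiU
          exact Finset.mem_erase.mpr ⟨fun h => by omega, hiT⟩
        have := Finset.card_le_card hsub
        have h3 := Finset.card_erase_of_mem htT
        omega
      have hUT2 : 2 ≤ (U \ T).card := by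
        have h4 := Finset.card_inter_add_card_sdiff U T
        have h5 : (U ∩ T).card = (T ∩ U).card := by rw [Finset.inter_comm]
        have hUcard : U.card = r := U_card hr
        omega
      obtain ⟨a, ha, b, hb, hab⟩ := Finset.one_lt_card.mp hUT2
      have haU := (Finset.mem_sdiff.mp ha).1
      have haT := (Finset.mem_sdiff.mp ha).2
      have hbU := (Finset.mem_sdiff.mp hb).1
      have hbT := (Finset.mem_sdiff.mp hb).2
      have hav : a.val < r := by simpa [hU] using haU
      have hbv : b.val < r := by simpa [hU] using hbU
      -- split T
      have hTsub : T ∩ U ⊆ T := Finset.inter_subset_left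
      have hdecomp := Finset.sum_sdiff (f := y) hTsub
      have hTdiff : T \ (T ∩ U) = T \ U := Finset.sdiff_inter_self_left T U
      rw [hTdiff] at hdecomp
      -- bound on T \ U part
      have h1 : ∑ i ∈ T \ U, y i ≤ -(r : ℝ) := by
        have hall : ∀ i ∈ T \ U, y i = -(r : ℝ) := by
          intro i hi
          have : ¬ i.val < r := by
            have := (Finset.mem_sdiff.mp hi).2
            by_contra hcon
            exact this (by simp [hU]; omega)
          simp only [hy]
          rw [if_neg this]
        rw [Finset.sum_congr rfl hall, Finset.sum_const, nsmul_eq_mul]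
        have hcard1 : 1 ≤ (T \ U).card := by
          rw [Nat.one_le_iff_ne_zero, ← Nat.pos_iff_ne_zero, Finset.card_pos]
          exact ⟨t, Finset.mem_sdiff.mpr ⟨htT, htU⟩⟩
        have hc1 : (1 : ℝ) ≤ ((T \ U).card : ℝ) := by exact_mod_cast hcard1
        have hrpos : (0:ℝ) < (r : ℝ) := by positivity
        nlinarith
      -- bound on T ∩ U part
      have hba : b ∈ U.erase a := Finset.mem_erase.mpr ⟨Ne.symm hab, hbU⟩
      have h2 : ∑ i ∈ T ∩ U, y i ≤ C - y a - y b := by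
        have hsub2 : T ∩ U ⊆ (U.erase a).erase b := by
          intro i hi
          have hiT := (Finset.mem_inter.mp hi).1
          have hiU := (Finset.mem_inter.mp hi).2
          refine Finset.mem_erase.mpr ⟨fun h => hbT (h ▸ hiT), ?_⟩
          exact Finset.mem_erase.mpr ⟨fun h => haT (h ▸ hiT), hiU⟩
        have hmono : ∑ i ∈ T ∩ U, y i ≤ ∑ i ∈ (U.erase a).erase b, y i := by
          apply Finset.sum_le_sum_of_subset_of_nonneg hsub2
          intro i hiU2 _
          have hiU3 : i ∈ U := Finset.mem_erase.mp (Finset.mem_erase.mp hiU2).2 |>.2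
          exact (hynn i (by simpa [hU] using hiU3)).1
        have he1 : ∑ i ∈ (U.erase a).erase b, y i = (∑ i ∈ U.erase a, y i) - y b :=
          Finset.sum_erase_eq_sub hba
        have he2 : ∑ i ∈ U.erase a, y i = C - y a := Finset.sum_erase_eq_sub haU
        rw [he1, he2] at hmono
        linarith
      -- y a + y b ≥ 3
      have hvals : a.val ≠ b.val := fun h => hab (Fin.ext h)
      have h3 : (3 : ℝ) ≤ y a + y b := by
        have hya := (hynn a hav).2
        have hyb := (hynn b hbv).2
        have hnat : a.val + b.val + 3 ≤ 2 * r := by omega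
        have hcast : ((a.val : ℕ) : ℝ) + ((b.val : ℕ) : ℝ) + 3 ≤ 2 * (r : ℝ) := by
          exact_mod_cast hnat
        rw [hya, hyb]
        linarith
      have hkr : ((k : ℕ) : ℝ) + 1 ≤ (r : ℝ) := by
        have h6 : (k : ℕ) + 1 ≤ r := hk
        exact_mod_cast h6
      linarith [hdecomp, h1, h2, h3, hkr]

end Lineups2

lemma zero_lt_two_r {r : ℕ} (hr : 2 ≤ r) : 0 < 2 * r - 2 := by omega

lemma two_r_three_lt {r : ℕ} (hr : 2 ≤ r) : 2 * r - 3 < 2 * r - 2 := by omega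

section Unique

variable {r : ℕ} (hr : 2 ≤ r)

include hr

lemma cnt_le_of_notmem_zero {A : Finset (Fin (2 * r - 2))}
    (h0 : (⟨0, zero_lt_two_r hr⟩ : Fin (2 * r - 2)) ∉ A) (m : ℕ) :
    (A.filter fun i => i.val ≤ m).card ≤ m := by
  rw [← Finset.card_image_of_injective _ Fin.val_injective]
  have hsub : (A.filter fun i => i.val ≤ m).image Fin.val ⊆ Finset.Ico 1 (m + 1) := by
    intro a ha
    simp only [Finset.mem_image, Finset.mem_filter] at ha
    obtain ⟨i, ⟨hiA, him⟩, rfl⟩ := ha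
    have h1 : i.val ≠ 0 := by
      intro h
      exact h0 (by rwa [show (⟨0, zero_lt_two_r hr⟩ : Fin (2 * r - 2)) = i from (Fin.ext h.symm)])
    simp only [Finset.mem_Ico]
    omega
  have := Finset.card_le_card hsub
  rw [Nat.card_Ico] at this
  omega

lemma unique_b {S : Fin r → Finset (Fin (2 * r - 2))}
    (hS : IsFundFermionicLineup (2 * r - 2) (r - 1) S) (j : Fin r)
    (hj : (⟨2 * r - 3, two_r_three_lt hr⟩ : Fin (2 * r - 2)) ∈ S j) : S = breakaway r := by
  apply lineup_eq (by omega) hS (breakaway_inj hr) (breakaway_card hr) j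
  · intro k m
    rw [breakaway_filter hr k m]
    have hk := k.isLt
    have hcardS : (S j).card = r - 1 := hS.2.1 j
    by_cases h1 : m < r - 2
    · have := cnt_le_succ (m := m) (S j)
      split_ifs <;> omega
    · by_cases h2 : m < 2 * r - 3
      · have hsub : ((S j).filter fun i => i.val ≤ m) ⊆ (S j).erase ⟨2 * r - 3, two_r_three_lt hr⟩ := by
          intro i hi
          have hi1 := (Finset.mem_filter.mp hi).1
          have hi2 := (Finset.mem_filter.mp hi).2
          refine Finset.mem_erase.mpr ⟨?_, hi1⟩
          intro h
          rw [h] at hi2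
          simp only [Fin.val_mk] at hi2
          omega
        have h3 := Finset.card_le_card hsub
        have h4 := Finset.card_erase_of_mem hj
        split_ifs <;> omega
      · have h3 := Finset.card_filter_le (S j) (fun i => i.val ≤ m)
        split_ifs <;> omega
  · intro k l hkl m
    rw [breakaway_filter hr k m, breakaway_filter hr l m]
    have hkl' : (k : ℕ) ≤ (l : ℕ) := hkl
    split_ifs <;> omega

lemma unique_p {S : Fin r → Finset (Fin (2 * r - 2))}
    (hS : IsFundFermionicLineup (2 * r - 2) (r - 1) S) (j : Fin r)
    (hj : (⟨0, zero_lt_two_r hr⟩ : Fin (2 * r - 2)) ∉ S j) : S = peloton r := by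
  apply lineup_eq (by omega) hS (peloton_inj hr) (peloton_card hr) j
  · intro k m
    rw [peloton_filter hr k m]
    have hk := k.isLt
    have hcardS : (S j).card = r - 1 := hS.2.1 j
    by_cases h1 : m < r - 1
    · have := cnt_le_of_notmem_zero hr hj m
      split_ifs <;> omega
    · have h3 := Finset.card_filter_le (S j) (fun i => i.val ≤ m)
      split_ifs <;> omega
  · intro k l hkl m
    rw [peloton_filter hr k m, peloton_filter hr l m]
    have hkl' : (k : ℕ) ≤ (l : ℕ) := hkl
    have hk := k.isLt
    have hl := l.isLt
    split_ifs <;> omega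

end Unique

/-- For `N = r-1`, `d = 2r-2`: the breakaway and peloton tuples are fundamental
lineups; the breakaway occupation vector is the unique one with nonzero last
coordinate, and the peloton occupation vector is the unique one with first
coordinate less than one. -/
theorem breakaway_peloton_unique
    {r : ℕ} (hr : 2 ≤ r)
    (w : Fin r → ℝ) (hww : StrictAnti w) (hwpos : ∀ k, 0 < w k)
    (hwsum : ∑ k, w k = 1) :
    IsFundFermionicLineup (2 * r - 2) (r - 1) (breakaway r) ∧
    IsFundFermionicLineup (2 * r - 2) (r - 1) (peloton r) ∧
    (∀ S : Fin r → Finset (Fin (2 * r - 2)),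
      IsFundFermionicLineup (2 * r - 2) (r - 1) S →
      occVec w S ⟨2 * r - 3, by omega⟩ ≠ 0 →
      occVec w S = occVec w (breakaway r)) ∧
    (∀ S : Fin r → Finset (Fin (2 * r - 2)),
      IsFundFermionicLineup (2 * r - 2) (r - 1) S →
      occVec w S ⟨0, by omega⟩ < 1 →
      occVec w S = occVec w (peloton r)) := by
  refine ⟨breakaway_lineup hr, peloton_lineup hr, ?_, ?_⟩
  · intro S hS hne
    have hD : ∃ j, (⟨2 * r - 3, by omega⟩ : Fin (2 * r - 2)) ∈ S j := by
      by_contra hcon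
      push_neg at hcon
      apply hne
      unfold occVec
      apply Finset.sum_eq_zero
      intro j _
      simp [chiF, hcon j]
    obtain ⟨j, hj⟩ := hD
    rw [unique_b hr hS j hj]
  · intro S hS hlt
    have hD : ∃ j, (⟨0, by omega⟩ : Fin (2 * r - 2)) ∉ S j := by
      by_contra hcon
      push_neg at hcon
      have h1 : occVec w S ⟨0, by omega⟩ = 1 := by
        unfold occVec
        rw [← hwsum]
        apply Finset.sum_congr rfl
        intro j _
        simp [chiF, hcon j]
      rw [h1] at hlt
      exact lt_irrefl _ hlt
    obtain ⟨j, hj⟩ := hD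
    rw [unique_p hr hS j hj]
end
end

section
/- Let r ≥ 2, N ≥ r − 1, and d ≥ N + r − 1, and define υ sending an (r−1)-subset S = {s_1 < ⋯ < s_{r−1}} of [2r−2] to the N-subset υ(S) = {1,…,N−r+1} ∪ {s_i + N − r + 1 : 1 ≤ i ≤ r−1} of [d]. Then the map sending a tuple (S_1,…,S_r) to (υ(S_1),…,υ(S_r)) is a bijection from the set of fundamental lineups of length r of the fermionic configuration of (r−1)-subsets of [2r−2] onto the set of fundamental lineups of length r of the fermionic configuration of N-subsets of [d]. -/
noncomputable section

/-- Characteristic vector in `ℝ^d` of a subset `S ⊆ {1,…,d}` of `ℕ`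
(the coordinate of index `i : Fin d` corresponds to the element `(i : ℕ) + 1`). -/
def chiN (d : ℕ) (S : Finset ℕ) : Fin d → ℝ := fun i => if (i : ℕ) + 1 ∈ S then 1 else 0

/-- The fundamental vector `y ∈ ℝ^d` induces `(χ(S 0),…,χ(S (r-1)))` as an
`r`-lineup of the fermionic configuration of `N`-subsets of `[d]`. -/
def InducesN (d N : ℕ) {r : ℕ} (y : Fin d → ℝ) (S : Fin r → Finset ℕ) : Prop :=
  Function.Injective S ∧ (∀ k, S k ⊆ Finset.Icc 1 d ∧ (S k).card = N) ∧
  (∀ k l : Fin r, k < l → dotp y (chiN d (S l)) < dotp y (chiN d (S k))) ∧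
  (∀ T : Finset ℕ, T ⊆ Finset.Icc 1 d → T.card = N → (∀ k, T ≠ S k) →
    ∀ k, dotp y (chiN d T) < dotp y (chiN d (S k)))

/-- `(S 0,…,S (r-1))` is a fundamental lineup of length `r` of the fermionic
configuration of `N`-subsets of `[d]`. -/
def IsFundLineupN (d N : ℕ) {r : ℕ} (S : Fin r → Finset ℕ) : Prop :=
  ∃ y : Fin d → ℝ, Fund y ∧ InducesN d N y S

/-- The map `υ` sending an `(r-1)`-subset `S` of `[2r-2]` to the `N`-subset
`{1,…,N-r+1} ∪ {s + (N-r+1) : s ∈ S}` of `[d]`. -/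
def ups (r N : ℕ) (S : Finset ℕ) : Finset ℕ :=
  Finset.Icc 1 (N + 1 - r) ∪ S.image (fun s => s + (N + 1 - r))

open Finset

namespace FLAux

def sval (d : ℕ) (y : Fin d → ℝ) (t : ℕ) : ℝ :=
  if h : t - 1 < d then y ⟨t - 1, h⟩ else 0

lemma sval_anti {d : ℕ} {y : Fin d → ℝ} (hy : Fund y) {i j : ℕ}
    (h1 : 1 ≤ i) (hij : i ≤ j) (hjd : j ≤ d) : sval d y j ≤ sval d y i := by
  have hi : i - 1 < d := by omega
  have hj : j - 1 < d := by omega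
  simp only [sval, dif_pos hi, dif_pos hj]
  exact hy ⟨i-1, hi⟩ ⟨j-1, hj⟩ (Fin.mk_le_mk.2 (by omega))

lemma dotp_chiN {d : ℕ} (y : Fin d → ℝ) {T : Finset ℕ} (hT : T ⊆ Finset.Icc 1 d) :
    dotp y (chiN d T) = ∑ t ∈ T, sval d y t := by
  have h1 : ∀ i : Fin d, y i * chiN d T i =
      (fun n => if n + 1 ∈ T then sval d y (n+1) else 0) (i : ℕ) := by
    intro i
    simp only [chiN, mul_ite, mul_one, mul_zero]
    by_cases h : (i : ℕ) + 1 ∈ T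
    · simp only [if_pos h]
      have hlt : (i : ℕ) + 1 - 1 < d := by omega
      simp only [sval, dif_pos hlt]
      show y i = y ⟨(i:ℕ)+1-1, hlt⟩
      exact congrArg y (Fin.ext (by simp))
    · simp [h]
  calc dotp y (chiN d T)
      = ∑ i : Fin d, (fun n => if n + 1 ∈ T then sval d y (n+1) else 0) (i : ℕ) := by
        rw [dotp]; exact Finset.sum_congr rfl (fun i _ => h1 i)
    _ = ∑ i ∈ Finset.range d, (if i + 1 ∈ T then sval d y (i+1) else 0) :=
        Fin.sum_univ_eq_sum_range (fun n => if n + 1 ∈ T then sval d y (n+1) else 0) d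
    _ = ∑ i ∈ (Finset.range d).filter (fun i => i + 1 ∈ T), sval d y (i+1) :=
        (Finset.sum_filter _ _).symm
    _ = ∑ i ∈ T.image (fun t => t - 1), sval d y (i+1) := by
        congr 1
        ext n
        simp only [mem_filter, mem_range, mem_image]
        constructor
        · rintro ⟨hn, hmem⟩; exact ⟨n+1, hmem, by omega⟩
        · rintro ⟨t, ht, rfl⟩
          have h2 := hT ht
          simp only [mem_Icc] at h2
          refine ⟨by omega, ?_⟩
          have : t - 1 + 1 = t := by omega
          rw [this]; exact ht
    _ = ∑ t ∈ T, sval d y (t - 1 + 1) := by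
        apply Finset.sum_image
        intro a ha b hb hab
        have h2 := hT ha; have h3 := hT hb
        simp only [mem_Icc] at h2 h3
        have hab' : a - 1 = b - 1 := hab
        omega
    _ = ∑ t ∈ T, sval d y t := by
        apply Finset.sum_congr rfl
        intro t ht
        have h2 := hT ht; simp only [mem_Icc] at h2
        congr 1; omega

lemma no_better {d N r : ℕ} {y : Fin d → ℝ} {T : Fin r → Finset ℕ}
    (hT : InducesN d N y T) (k : Fin r) (B : Finset ℕ) (hB : r ≤ B.card)
    (F : ℕ → Finset ℕ) (hinj : Set.InjOn F B)
    (hprop : ∀ j ∈ B, F j ⊆ Finset.Icc 1 d ∧ (F j).card = N ∧ F j ≠ T k ∧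
      dotp y (chiN d (T k)) ≤ dotp y (chiN d (F j))) : False := by
  obtain ⟨Tinj, hTk, hord, hmax⟩ := hT
  by_cases hall : ∀ j ∈ B, ∃ l, F j = T l
  · classical
    set g : ℕ → Fin r := fun j => if h : ∃ l, F j = T l then h.choose else k with hg
    have hgspec : ∀ j ∈ B, F j = T (g j) := by
      intro j hj
      have h := hall j hj
      simp only [hg, dif_pos h]
      exact h.choose_spec
    have hgk : ∀ j ∈ B, g j ≠ k := by
      intro j hj he
      exact (hprop j hj).2.2.1 (he ▸ hgspec j hj)
    have hcard : B.card ≤ (Finset.univ.erase k).card := by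
      apply Finset.card_le_card_of_injOn g
      · intro j hj
        exact Finset.mem_erase.2 ⟨hgk j hj, Finset.mem_univ _⟩
      · intro a ha b hb hab
        apply hinj ha hb
        rw [hgspec a ha, hgspec b hb, hab]
    rw [Finset.card_erase_of_mem (Finset.mem_univ k), Finset.card_univ, Fintype.card_fin] at hcard
    have hr1 : 0 < r := k.pos
    omega
  · push_neg at hall
    obtain ⟨j, hj, hne⟩ := hall
    obtain ⟨h1, h2, h3, h4⟩ := hprop j hj
    have := hmax (F j) h1 h2 hne k
    linarith

lemma lineup_window {d N r : ℕ} (hr : 2 ≤ r) (hN : r - 1 ≤ N) (hd : N + r - 1 ≤ d)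
    {y : Fin d → ℝ} {T : Fin r → Finset ℕ} (hy : Fund y) (hT : InducesN d N y T) (k : Fin r) :
    Finset.Icc 1 (N + 1 - r) ⊆ T k ∧ T k ⊆ Finset.Icc 1 (N + r - 1) := by
  obtain ⟨Tinj, hTk, hord, hmax⟩ := hT
  have hsub := (hTk k).1
  have hcard := (hTk k).2
  have hdot : ∀ U ⊆ Finset.Icc 1 d, dotp y (chiN d U) = ∑ t ∈ U, sval d y t :=
    fun U hU => dotp_chiN y hU
  constructor
  · intro i hi
    simp only [mem_Icc] at hi
    by_contra hiT
    set B : Finset ℕ := (T k).filter (fun t => i < t) with hB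
    have hBcard : r ≤ B.card := by
      rw [hB]
      have hsplit := Finset.card_filter_add_card_filter_not
        (s := T k) (p := fun t => i < t)
      have hsub2 : (T k).filter (fun t => ¬ i < t) ⊆ Finset.Icc 1 (i - 1) := by
        intro t ht
        simp only [mem_filter, not_lt] at ht
        have h5 := hsub ht.1
        simp only [mem_Icc] at h5 ⊢
        have h6 : t ≠ i := fun he => hiT (he ▸ ht.1)
        omega
      have h7 := Finset.card_le_card hsub2
      rw [Nat.card_Icc] at h7
      omega
    refine no_better ⟨Tinj, hTk, hord, hmax⟩ k B hBcard
      (fun j => insert i ((T k).erase j)) ?_ ?_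
    · intro a ha b hb hab
      simp only [hB, Finset.coe_filter, Set.mem_setOf_eq] at ha hb
      by_contra hne
      have hab' : insert i ((T k).erase a) = insert i ((T k).erase b) := hab
      have hbmem : b ∈ insert i ((T k).erase a) :=
        Finset.mem_insert_of_mem (Finset.mem_erase.2 ⟨fun h => hne h.symm, hb.1⟩)
      rw [hab'] at hbmem
      rcases Finset.mem_insert.1 hbmem with h | h
      · omega
      · exact (Finset.mem_erase.1 h).1 rfl
    · intro j hj
      simp only [hB, mem_filter] at hj
      obtain ⟨hjT, hij⟩ := hj
      have hjd := hsub hjT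
      simp only [mem_Icc] at hjd
      have hiI : i ∈ Finset.Icc 1 d := by simp only [mem_Icc]; omega
      have hinot : i ∉ (T k).erase j := fun h => hiT (Finset.mem_of_mem_erase h)
      refine ⟨?_, ?_, ?_, ?_⟩
      · intro t ht
        rcases Finset.mem_insert.1 ht with h | h
        · exact h ▸ hiI
        · exact hsub (Finset.mem_of_mem_erase h)
      · rw [Finset.card_insert_of_notMem hinot, Finset.card_erase_of_mem hjT]
        omega
      · intro he
        have he' : insert i ((T k).erase j) = T k := he
        exact hiT (he' ▸ Finset.mem_insert_self i ((T k).erase j))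
      · rw [hdot _ hsub, hdot _ ?_]
        · rw [Finset.sum_insert hinot, Finset.sum_erase_eq_sub hjT]
          have : sval d y j ≤ sval d y i := sval_anti hy (by omega) (by omega) (by omega)
          linarith
        · intro t ht
          rcases Finset.mem_insert.1 ht with h | h
          · exact h ▸ hiI
          · exact hsub (Finset.mem_of_mem_erase h)
  · intro j hj
    have hjd := hsub hj
    simp only [mem_Icc] at hjd ⊢
    by_contra hcon
    have hjbig : N + r ≤ j := by omega
    set B : Finset ℕ := Finset.Icc 1 (j-1) \ T k with hB
    have hBcard : r ≤ B.card := by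
      have h1 : (Finset.Icc 1 (j-1) ∩ T k).card + (Finset.Icc 1 (j-1) \ T k).card
          = (Finset.Icc 1 (j-1)).card := Finset.card_inter_add_card_sdiff _ _
      have h2 : Finset.Icc 1 (j-1) ∩ T k ⊆ (T k).erase j := by
        intro t ht
        simp only [Finset.mem_inter, mem_Icc] at ht
        exact Finset.mem_erase.2 ⟨by omega, ht.2⟩
      have h3 := Finset.card_le_card h2
      rw [Finset.card_erase_of_mem hj] at h3
      rw [Nat.card_Icc] at h1
      rw [hB]
      omega
    refine no_better ⟨Tinj, hTk, hord, hmax⟩ k B hBcard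
      (fun i => insert i ((T k).erase j)) ?_ ?_
    · intro a ha b hb hab
      simp only [hB, Finset.coe_sdiff, Set.mem_diff, Finset.mem_coe, mem_Icc] at ha hb
      by_contra hne
      have hab' : insert a ((T k).erase j) = insert b ((T k).erase j) := hab
      have hmem : a ∈ insert b ((T k).erase j) := hab' ▸ Finset.mem_insert_self a ((T k).erase j)
      rcases Finset.mem_insert.1 hmem with h | h
      · exact hne h
      · exact ha.2 (Finset.mem_of_mem_erase h)
    · intro i hi
      simp only [hB, Finset.mem_sdiff, mem_Icc] at hi
      obtain ⟨⟨hi1, hi2⟩, hiT⟩ := hi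
      have hiI : i ∈ Finset.Icc 1 d := by simp only [mem_Icc]; omega
      have hinot : i ∉ (T k).erase j := fun h => hiT (Finset.mem_of_mem_erase h)
      refine ⟨?_, ?_, ?_, ?_⟩
      · intro t ht
        rcases Finset.mem_insert.1 ht with h | h
        · exact h ▸ hiI
        · exact hsub (Finset.mem_of_mem_erase h)
      · rw [Finset.card_insert_of_notMem hinot, Finset.card_erase_of_mem hj]
        omega
      · intro he
        have he' : insert i ((T k).erase j) = T k := he
        have hjmem : j ∈ insert i ((T k).erase j) := by rw [he']; exact hj
        rcases Finset.mem_insert.1 hjmem with h | h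
        · omega
        · exact (Finset.mem_erase.1 h).1 rfl
      · rw [hdot _ hsub, hdot _ ?_]
        · rw [Finset.sum_insert hinot, Finset.sum_erase_eq_sub hj]
          have : sval d y j ≤ sval d y i := sval_anti hy (by omega) (by omega) (by omega)
          linarith
        · intro t ht
          rcases Finset.mem_insert.1 ht with h | h
          · exact h ▸ hiI
          · exact hsub (Finset.mem_of_mem_erase h)

lemma ups_disj {r N : ℕ} {S : Finset ℕ} (hS : ∀ s ∈ S, 1 ≤ s) :
    Disjoint (Finset.Icc 1 (N + 1 - r)) (S.image (fun s => s + (N + 1 - r))) := by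
  rw [Finset.disjoint_left]
  intro t ht htim
  simp only [mem_Icc] at ht
  simp only [mem_image] at htim
  obtain ⟨s, hs, rfl⟩ := htim
  have := hS s hs
  omega

lemma ups_card {r N : ℕ} (hr : 2 ≤ r) (hN : r - 1 ≤ N) {S : Finset ℕ}
    (hS : S ⊆ Finset.Icc 1 (2*r-2)) (hc : S.card = r - 1) : (ups r N S).card = N := by
  have h1 : ∀ s ∈ S, 1 ≤ s := fun s hs => (mem_Icc.1 (hS hs)).1
  rw [ups, Finset.card_union_of_disjoint (ups_disj h1),
    Finset.card_image_of_injective _ (fun a b h => by omega), Nat.card_Icc, hc]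
  omega

lemma ups_subset {r N : ℕ} (hr : 2 ≤ r) (hN : r - 1 ≤ N) {S : Finset ℕ}
    (hS : S ⊆ Finset.Icc 1 (2*r-2)) : ups r N S ⊆ Finset.Icc 1 (N + r - 1) := by
  intro t ht
  rw [ups, Finset.mem_union] at ht
  simp only [mem_Icc] at *
  rcases ht with h | h
  · omega
  · simp only [mem_image] at h
    obtain ⟨s, hs, rfl⟩ := h
    have := mem_Icc.1 (hS hs)
    omega

lemma ups_pre {r N : ℕ} {S : Finset ℕ} : Finset.Icc 1 (N + 1 - r) ⊆ ups r N S :=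
  Finset.subset_union_left

lemma ups_inj {r N : ℕ} {S S' : Finset ℕ} (hS : ∀ s ∈ S, 1 ≤ s) (hS' : ∀ s ∈ S', 1 ≤ s)
    (h : ups r N S = ups r N S') : S = S' := by
  have key : ∀ (A B : Finset ℕ), (∀ s ∈ A, 1 ≤ s) → ups r N A = ups r N B →
      ∀ s ∈ A, s ∈ B := by
    intro A B hA hAB s hs
    have hm : s + (N + 1 - r) ∈ ups r N B := by
      rw [← hAB, ups, Finset.mem_union]
      exact Or.inr (Finset.mem_image_of_mem _ hs)
    rw [ups, Finset.mem_union] at hm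
    rcases hm with hm | hm
    · have h1 := hA s hs
      simp only [mem_Icc] at hm
      omega
    · simp only [mem_image] at hm
      obtain ⟨s', hs', he⟩ := hm
      have : s' = s := by omega
      exact this ▸ hs'
  ext s
  exact ⟨fun hs => key S S' hS h s hs, fun hs => key S' S hS' h.symm s hs⟩

lemma ups_surj {r N : ℕ} (hr : 2 ≤ r) (hN : r - 1 ≤ N) {T : Finset ℕ}
    (hTc : T.card = N) (hpre : Finset.Icc 1 (N + 1 - r) ⊆ T)
    (hup : T ⊆ Finset.Icc 1 (N + r - 1)) :
    ∃ S, S ⊆ Finset.Icc 1 (2*r-2) ∧ S.card = r - 1 ∧ ups r N S = T := by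
  refine ⟨(T \ Finset.Icc 1 (N + 1 - r)).image (fun t => t - (N + 1 - r)), ?_, ?_, ?_⟩
  · intro x hx
    simp only [mem_image, Finset.mem_sdiff, mem_Icc] at hx
    obtain ⟨t, ⟨ht, htn⟩, rfl⟩ := hx
    have := mem_Icc.1 (hup ht)
    simp only [mem_Icc]
    omega
  · rw [Finset.card_image_of_injOn, Finset.card_sdiff_of_subset hpre, Nat.card_Icc, hTc]
    · omega
    · intro a ha b hb hab
      have hab' : a - (N + 1 - r) = b - (N + 1 - r) := hab
      simp only [Finset.coe_sdiff, Set.mem_diff, Finset.mem_coe, Finset.mem_sdiff, mem_Icc] at ha hb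
      have ha1 := mem_Icc.1 (hup ha.1)
      have hb1 := mem_Icc.1 (hup hb.1)
      have ha2 := ha.2
      have hb2 := hb.2
      omega
  · ext t
    rw [ups, Finset.mem_union]
    constructor
    · rintro (h | h)
      · exact hpre h
      · rw [Finset.mem_image] at h
        obtain ⟨x, hx, rfl⟩ := h
        rw [Finset.mem_image] at hx
        obtain ⟨u, hu, rfl⟩ := hx
        rw [Finset.mem_sdiff, mem_Icc] at hu
        obtain ⟨hxT, hxn⟩ := hu
        have h1 := mem_Icc.1 (hup hxT)
        have heq : u - (N + 1 - r) + (N + 1 - r) = u := by omega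
        rw [heq]; exact hxT
    · intro ht
      by_cases h : t ≤ N + 1 - r
      · have h1 := mem_Icc.1 (hup ht)
        exact Or.inl (mem_Icc.2 ⟨by omega, h⟩)
      · right
        rw [Finset.mem_image]
        refine ⟨t - (N + 1 - r), ?_, ?_⟩
        · rw [Finset.mem_image]
          exact ⟨t, by rw [Finset.mem_sdiff, mem_Icc]; exact ⟨ht, by omega⟩, rfl⟩
        · have h1 := mem_Icc.1 (hup ht)
          omega

lemma sum_ups {r N : ℕ} (w : ℕ → ℝ) {S : Finset ℕ} (hS : ∀ s ∈ S, 1 ≤ s) :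
    ∑ t ∈ ups r N S, w t
      = (∑ t ∈ Finset.Icc 1 (N + 1 - r), w t) + ∑ s ∈ S, w (s + (N + 1 - r)) := by
  rw [ups, Finset.sum_union (ups_disj hS), Finset.sum_image (fun a _ b _ h => by omega)]

lemma sum_Icc_fin (n : ℕ) (f : ℕ → ℝ) :
    ∑ s ∈ Finset.Icc 1 n, f s = ∑ j : Fin n, f ((j : ℕ) + 1) := by
  rw [Fin.sum_univ_eq_sum_range (fun j => f (j + 1)) n]
  apply Finset.sum_nbij' (i := fun s => s - 1) (j := fun j => j + 1)
  · intro a ha; simp only [mem_Icc] at ha; simp only [Finset.mem_range]; omega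
  · intro a ha; simp only [Finset.mem_range] at ha; simp only [mem_Icc]; omega
  · intro a ha; simp only [mem_Icc] at ha; omega
  · intro a _; omega
  · intro a ha; simp only [mem_Icc] at ha; congr 1; omega

lemma abs_sval_le {n : ℕ} (z : Fin n → ℝ) (s : ℕ) :
    |sval n z s| ≤ ∑ j : Fin n, |z j| := by
  by_cases h : s - 1 < n
  · simp only [sval, dif_pos h]
    exact Finset.single_le_sum (f := fun j => |z j|) (fun j _ => abs_nonneg _) (Finset.mem_univ _)
  · simp only [sval, dif_neg h, abs_zero]
    positivity

lemma sum_abs_sval_le {n : ℕ} (z : Fin n → ℝ) {A : Finset ℕ} (hA : A ⊆ Finset.Icc 1 n) :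
    ∑ s ∈ A, |sval n z s| ≤ ∑ j : Fin n, |z j| := by
  calc ∑ s ∈ A, |sval n z s| ≤ ∑ s ∈ Finset.Icc 1 n, |sval n z s| :=
        Finset.sum_le_sum_of_subset_of_nonneg hA (fun _ _ _ => abs_nonneg _)
    _ = ∑ j : Fin n, |sval n z ((j : ℕ) + 1)| := sum_Icc_fin n _
    _ = ∑ j : Fin n, |z j| := by
        apply Finset.sum_congr rfl
        intro j _
        have hj : (j : ℕ) + 1 - 1 < n := by have := j.2; omega
        simp only [sval, dif_pos hj]
        have he : (⟨(j : ℕ) + 1 - 1, hj⟩ : Fin n) = j := Fin.ext (by simp)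
        rw [he]

lemma sum_sval_ge {n : ℕ} (z : Fin n → ℝ) {A : Finset ℕ} (hA : A ⊆ Finset.Icc 1 n) :
    -(∑ j : Fin n, |z j|) ≤ ∑ s ∈ A, sval n z s := by
  have h1 : ∑ s ∈ A, -|sval n z s| ≤ ∑ s ∈ A, sval n z s :=
    Finset.sum_le_sum (fun s _ => neg_abs_le _)
  have h2 : ∑ s ∈ A, -|sval n z s| = -(∑ s ∈ A, |sval n z s|) := by
    rw [Finset.sum_neg_distrib]
  have h3 := sum_abs_sval_le z hA
  linarith

lemma sum_sval_le {n : ℕ} (z : Fin n → ℝ) {A : Finset ℕ} (hA : A ⊆ Finset.Icc 1 n) :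
    ∑ s ∈ A, sval n z s ≤ ∑ j : Fin n, |z j| := by
  have h1 : ∑ s ∈ A, sval n z s ≤ ∑ s ∈ A, |sval n z s| :=
    Finset.sum_le_sum (fun s _ => le_abs_self _)
  have h3 := sum_abs_sval_le z hA
  linarith

lemma lineup_up {r N d : ℕ} (hr : 2 ≤ r) (hN : r - 1 ≤ N) (hd : N + r - 1 ≤ d)
    {S : Fin r → Finset ℕ} (hS : IsFundLineupN (2*r-2) (r-1) S) :
    IsFundLineupN d N (fun j => ups r N (S j)) := by
  obtain ⟨z, hz, Sinj, hSk, hord, hmax⟩ := hS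
  set W : ℝ := ∑ j : Fin (2*r-2), |z j| with hW
  have hW0 : 0 ≤ W := Finset.sum_nonneg (fun j _ => abs_nonneg _)
  set M : ℝ := 2*W + 1 with hM
  have hM0 : 0 < M := by rw [hM]; linarith
  have hsvb : ∀ s, |sval (2*r-2) z s| ≤ W := fun s => abs_sval_le z s
  set w : ℕ → ℝ := fun t => if t ≤ N + 1 - r then M
    else if t ≤ N + r - 1 then sval (2*r-2) z (t - (N + 1 - r)) else -M with hw
  have hwanti : ∀ i j : ℕ, 1 ≤ i → i ≤ j → w j ≤ w i := by
    intro i j h1 hij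
    simp only [hw]
    by_cases hjp : j ≤ N + 1 - r
    · rw [if_pos hjp, if_pos (le_trans hij hjp)]
    · rw [if_neg hjp]
      by_cases hip : i ≤ N + 1 - r
      · rw [if_pos hip]
        by_cases hjq : j ≤ N + r - 1
        · rw [if_pos hjq]
          have h2 := hsvb (j - (N + 1 - r))
          have h3 := le_abs_self (sval (2*r-2) z (j - (N + 1 - r)))
          rw [hM]; linarith
        · rw [if_neg hjq]; rw [hM]; linarith
      · rw [if_neg hip]
        by_cases hjq : j ≤ N + r - 1
        · rw [if_pos hjq, if_pos (le_trans hij hjq)]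
          exact sval_anti hz (by omega) (by omega) (by omega)
        · rw [if_neg hjq]
          by_cases hiq : i ≤ N + r - 1
          · rw [if_pos hiq]
            have h2 := hsvb (i - (N + 1 - r))
            have h3 := neg_abs_le (sval (2*r-2) z (i - (N + 1 - r)))
            rw [hM]; linarith
          · rw [if_neg hiq]
  set y : Fin d → ℝ := fun i => w ((i : ℕ) + 1) with hy
  have hyf : Fund y := by
    intro i j hij
    exact hwanti ((i : ℕ) + 1) ((j : ℕ) + 1) (by omega) (by exact_mod_cast Nat.add_le_add_right hij 1)
  have hsv : ∀ t, 1 ≤ t → t ≤ d → sval d y t = w t := by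
    intro t ht htd
    have hlt : t - 1 < d := by omega
    simp only [sval, dif_pos hlt, hy]
    congr 1
    omega
  have hdot : ∀ U : Finset ℕ, U ⊆ Finset.Icc 1 d → dotp y (chiN d U) = ∑ t ∈ U, w t := by
    intro U hU
    rw [dotp_chiN y hU]
    apply Finset.sum_congr rfl
    intro t ht
    have := mem_Icc.1 (hU ht)
    exact hsv t this.1 this.2
  have hups_sub : ∀ A : Finset ℕ, A ⊆ Finset.Icc 1 (2*r-2) → ups r N A ⊆ Finset.Icc 1 d :=
    fun A hA => (ups_subset hr hN hA).trans (Finset.Icc_subset_Icc_right hd)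
  have hupsdot : ∀ A : Finset ℕ, A ⊆ Finset.Icc 1 (2*r-2) →
      ∑ t ∈ ups r N A, w t = (N + 1 - r : ℕ) * M + dotp z (chiN (2*r-2) A) := by
    intro A hA
    have hA1 : ∀ s ∈ A, 1 ≤ s := fun s hs => (mem_Icc.1 (hA hs)).1
    rw [sum_ups w hA1, dotp_chiN z hA]
    congr 1
    · have hc : ∀ t ∈ Finset.Icc 1 (N + 1 - r), w t = M := by
        intro t ht
        have := mem_Icc.1 ht
        simp only [hw]
        rw [if_pos this.2]
      rw [Finset.sum_congr rfl hc, Finset.sum_const, Nat.card_Icc, nsmul_eq_mul]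
      norm_num
    · apply Finset.sum_congr rfl
      intro s hs
      have hsm := mem_Icc.1 (hA hs)
      simp only [hw]
      rw [if_neg (by omega), if_pos (by omega)]
      congr 1
      omega
  refine ⟨y, hyf, ?_, ?_, ?_, ?_⟩
  · intro k l h
    have h' : ups r N (S k) = ups r N (S l) := h
    exact Sinj (ups_inj (fun s hs => (mem_Icc.1 ((hSk k).1 hs)).1)
      (fun s hs => (mem_Icc.1 ((hSk l).1 hs)).1) h')
  · intro k
    exact ⟨hups_sub _ (hSk k).1, ups_card hr hN (hSk k).1 (hSk k).2⟩
  · intro k l hkl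
    have h1 := hord k l hkl
    rw [hdot _ (hups_sub _ (hSk l).1), hdot _ (hups_sub _ (hSk k).1),
      hupsdot _ (hSk l).1, hupsdot _ (hSk k).1]
    linarith
  · intro T hTd hTc hne k
    rw [hdot _ hTd, hdot _ (hups_sub _ (hSk k).1), hupsdot _ (hSk k).1]
    by_cases hgood : Finset.Icc 1 (N + 1 - r) ⊆ T ∧ T ⊆ Finset.Icc 1 (N + r - 1)
    · obtain ⟨S', h1, h2, h3⟩ := ups_surj hr hN hTc hgood.1 hgood.2
      have hne' : ∀ l, S' ≠ S l := by
        intro l he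
        exact hne l (by rw [← h3, he])
      have h4 := hmax S' h1 h2 hne' k
      rw [← h3, hupsdot _ h1]
      linarith
    · -- the excluded sets are far below
      set T1 : Finset ℕ := T.filter (fun t => t ≤ N + 1 - r) with hT1
      set T2 : Finset ℕ := T.filter (fun t => ¬ t ≤ N + 1 - r) with hT2
      set T2a : Finset ℕ := T2.filter (fun t => t ≤ N + r - 1) with hT2a
      set T2b : Finset ℕ := T2.filter (fun t => ¬ t ≤ N + r - 1) with hT2b
      have hsplit1 : ∑ t ∈ T1, w t + ∑ t ∈ T2, w t = ∑ t ∈ T, w t :=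
        Finset.sum_filter_add_sum_filter_not T _ w
      have hsplit2 : ∑ t ∈ T2a, w t + ∑ t ∈ T2b, w t = ∑ t ∈ T2, w t :=
        Finset.sum_filter_add_sum_filter_not T2 _ w
      have hS1 : ∑ t ∈ T1, w t = (T1.card : ℝ) * M := by
        have hc : ∀ t ∈ T1, w t = M := by
          intro t ht
          have := (Finset.mem_filter.1 ht).2
          simp only [hw]
          rw [if_pos this]
        rw [Finset.sum_congr rfl hc, Finset.sum_const, nsmul_eq_mul]
      have hS3 : ∑ t ∈ T2b, w t = -((T2b.card : ℝ) * M) := by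
        have hc : ∀ t ∈ T2b, w t = -M := by
          intro t ht
          have h5 := Finset.mem_filter.1 ht
          have h6 := (Finset.mem_filter.1 h5.1).2
          simp only [hw]
          rw [if_neg h6, if_neg h5.2]
        rw [Finset.sum_congr rfl hc, Finset.sum_const, nsmul_eq_mul, mul_neg]
      have hS2 : ∑ t ∈ T2a, w t ≤ W := by
        have he : ∀ t ∈ T2a, w t = sval (2*r-2) z (t - (N + 1 - r)) := by
          intro t ht
          have h5 := Finset.mem_filter.1 ht
          have h6 := (Finset.mem_filter.1 h5.1).2
          simp only [hw]
          rw [if_neg h6, if_pos h5.2]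
        rw [Finset.sum_congr rfl he]
        have hinj : ∀ a ∈ T2a, ∀ b ∈ T2a, a - (N + 1 - r) = b - (N + 1 - r) → a = b := by
          intro a ha b hb hab
          have h5 := (Finset.mem_filter.1 ((Finset.mem_filter.1 ha).1)).2
          have h6 := (Finset.mem_filter.1 ((Finset.mem_filter.1 hb).1)).2
          omega
        calc ∑ t ∈ T2a, sval (2*r-2) z (t - (N + 1 - r))
            = ∑ x ∈ T2a.image (fun t => t - (N + 1 - r)), sval (2*r-2) z x :=
              (Finset.sum_image hinj).symm
          _ ≤ W := by
              apply sum_sval_le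
              intro x hx
              rw [Finset.mem_image] at hx
              obtain ⟨t, ht, rfl⟩ := hx
              have h5 := Finset.mem_filter.1 ht
              have h6 := (Finset.mem_filter.1 h5.1).2
              have h7 := h5.2
              simp only [mem_Icc]
              omega
      have ha_le : T1.card ≤ N + 1 - r := by
        have : T1 ⊆ Finset.Icc 1 (N + 1 - r) := by
          intro t ht
          have h5 := Finset.mem_filter.1 ht
          have h6 := mem_Icc.1 (hTd h5.1)
          simp only [mem_Icc]
          omega
        have := Finset.card_le_card this
        rwa [Nat.card_Icc] at this
      have hzk : -W ≤ dotp z (chiN (2*r-2) (S k)) := by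
        rw [dotp_chiN z (hSk k).1]
        exact sum_sval_ge z (hSk k).1
      have hkey : (T1.card : ℝ) * M - (T2b.card : ℝ) * M ≤ (N + 1 - r : ℕ) * M - M := by
        rcases (not_and_or.1 hgood) with hbad | hbad
        · obtain ⟨i, hi, hiT⟩ := Finset.not_subset.1 hbad
          have hi1 := mem_Icc.1 hi
          have hT1e : T1 ⊆ (Finset.Icc 1 (N + 1 - r)).erase i := by
            intro t ht
            have h5 := Finset.mem_filter.1 ht
            have h6 := mem_Icc.1 (hTd h5.1)
            rw [Finset.mem_erase, mem_Icc]
            exact ⟨fun he => hiT (he ▸ h5.1), by omega⟩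
          have h7 := Finset.card_le_card hT1e
          rw [Finset.card_erase_of_mem hi, Nat.card_Icc] at h7
          have h8 : (T1.card : ℝ) ≤ (N + 1 - r : ℕ) - 1 := by
            have h9 : T1.card + 1 ≤ N + 1 - r := by omega
            have := (Nat.cast_le (α := ℝ)).2 h9
            push_cast at this
            linarith
          have h10 : (T1.card : ℝ) * M ≤ ((N + 1 - r : ℕ) - 1) * M :=
            mul_le_mul_of_nonneg_right h8 (le_of_lt hM0)
          have h11 : 0 ≤ (T2b.card : ℝ) * M :=
            mul_nonneg (Nat.cast_nonneg _) (le_of_lt hM0)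
          linarith
        · obtain ⟨t, ht, htn⟩ := Finset.not_subset.1 hbad
          have h6 := mem_Icc.1 (hTd ht)
          have h7 : t ∈ T2b := by
            rw [hT2b, Finset.mem_filter, hT2, Finset.mem_filter]
            have : ¬ t ≤ N + r - 1 := by
              intro hle
              exact htn (mem_Icc.2 ⟨h6.1, hle⟩)
            exact ⟨⟨ht, by omega⟩, this⟩
          have h8 : 1 ≤ T2b.card := Finset.card_pos.2 ⟨t, h7⟩
          have h9 : (1 : ℝ) ≤ (T2b.card : ℝ) := by exact_mod_cast h8
          have h10 : (T1.card : ℝ) * M ≤ (N + 1 - r : ℕ) * M :=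
            mul_le_mul_of_nonneg_right (by exact_mod_cast ha_le) (le_of_lt hM0)
          have h11 : M ≤ (T2b.card : ℝ) * M := by
            nlinarith
          linarith
      have hfin : ∑ t ∈ T, w t ≤ (N + 1 - r : ℕ) * M - M + W := by
        rw [← hsplit1, ← hsplit2, hS1, hS3]
        linarith
      rw [hM] at hfin ⊢
      linarith

lemma lineup_down {r N d : ℕ} (hr : 2 ≤ r) (hN : r - 1 ≤ N) (hd : N + r - 1 ≤ d)
    {T : Fin r → Finset ℕ} (hT : IsFundLineupN d N T) :
    ∃ S : Fin r → Finset ℕ, IsFundLineupN (2*r-2) (r-1) S ∧ ∀ j, ups r N (S j) = T j := by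
  obtain ⟨y, hy, hind⟩ := hT
  have hwin : ∀ k, Finset.Icc 1 (N+1-r) ⊆ T k ∧ T k ⊆ Finset.Icc 1 (N+r-1) :=
    fun k => lineup_window hr hN hd hy hind k
  obtain ⟨Tinj, hTk, hord, hmax⟩ := hind
  have hex : ∀ k, ∃ S, S ⊆ Finset.Icc 1 (2*r-2) ∧ S.card = r-1 ∧ ups r N S = T k :=
    fun k => ups_surj hr hN (hTk k).2 (hwin k).1 (hwin k).2
  choose S hS1 hS2 hS3 using hex
  have hlt : ∀ j : Fin (2*r-2), (j : ℕ) + (N+1-r) < d := by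
    intro j; have := j.2; omega
  set z : Fin (2*r-2) → ℝ := fun j => y ⟨(j : ℕ) + (N+1-r), hlt j⟩ with hz
  have hzf : Fund z := by
    intro i j hij
    have hij' : (i : ℕ) ≤ (j : ℕ) := hij
    exact hy _ _ (Fin.mk_le_mk.2 (by omega))
  have hzv : ∀ s, 1 ≤ s → s ≤ 2*r-2 → sval (2*r-2) z s = sval d y (s + (N+1-r)) := by
    intro s h1 h2
    have ha : s - 1 < 2*r-2 := by omega
    have hb : s + (N+1-r) - 1 < d := by omega
    simp only [sval, dif_pos ha, dif_pos hb, hz]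
    congr 1
    exact Fin.ext (by simp only []; omega)
  have hups_sub : ∀ A : Finset ℕ, A ⊆ Finset.Icc 1 (2*r-2) → ups r N A ⊆ Finset.Icc 1 d :=
    fun A hA => (ups_subset hr hN hA).trans (Finset.Icc_subset_Icc_right hd)
  have key : ∀ A : Finset ℕ, A ⊆ Finset.Icc 1 (2*r-2) →
      dotp y (chiN d (ups r N A))
        = (∑ t ∈ Finset.Icc 1 (N+1-r), sval d y t) + dotp z (chiN (2*r-2) A) := by
    intro A hA
    have hA1 : ∀ s ∈ A, 1 ≤ s := fun s hs => (mem_Icc.1 (hA hs)).1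
    rw [dotp_chiN y (hups_sub A hA), dotp_chiN z hA, sum_ups _ hA1]
    congr 1
    apply Finset.sum_congr rfl
    intro s hs
    have := mem_Icc.1 (hA hs)
    exact (hzv s this.1 this.2).symm
  refine ⟨S, ⟨z, hzf, ?_, ?_, ?_, ?_⟩, hS3⟩
  · intro k l h
    apply Tinj
    rw [← hS3 k, ← hS3 l, h]
  · exact fun k => ⟨hS1 k, hS2 k⟩
  · intro k l hkl
    have h1 := hord k l hkl
    rw [← hS3 k, ← hS3 l, key _ (hS1 k), key _ (hS1 l)] at h1
    linarith
  · intro T' hT' hT'c hne k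
    have h1 : ups r N T' ⊆ Finset.Icc 1 d := hups_sub T' hT'
    have h2 : (ups r N T').card = N := ups_card hr hN hT' hT'c
    have h3 : ∀ l, ups r N T' ≠ T l := by
      intro l he
      apply hne l
      rw [← hS3 l] at he
      exact ups_inj (fun s hs => (mem_Icc.1 (hT' hs)).1)
        (fun s hs => (mem_Icc.1 (hS1 l hs)).1) he
    have h4 := hmax _ h1 h2 h3 k
    rw [← hS3 k, key _ (hS1 k), key _ hT'] at h4
    linarith

end FLAux


/-- `υ` induces a bijection between the fundamental lineups of length `r` of
the fermionic configuration of `(r-1)`-subsets of `[2r-2]` and those of the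
fermionic configuration of `N`-subsets of `[d]`. -/
theorem ups_bijOn_fundamental_lineups
    {r N d : ℕ} (hr : 2 ≤ r) (hN : r - 1 ≤ N) (hd : N + r - 1 ≤ d) :
    Set.BijOn (fun S : Fin r → Finset ℕ => fun j => ups r N (S j))
      {S | IsFundLineupN (2 * r - 2) (r - 1) S}
      {T | IsFundLineupN d N T} := by
  refine ⟨?_, ?_, ?_⟩
  · intro S hS
    exact FLAux.lineup_up hr hN hd hS
  · intro S hS S' hS' h
    obtain ⟨y, hy, hind⟩ := hS
    obtain ⟨y', hy', hind'⟩ := hS'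
    funext j
    exact FLAux.ups_inj
      (fun s hs => (Finset.mem_Icc.1 ((hind.2.1 j).1 hs)).1)
      (fun s hs => (Finset.mem_Icc.1 ((hind'.2.1 j).1 hs)).1)
      (congrFun h j)
  · intro T hT
    obtain ⟨S, hS, hj⟩ := FLAux.lineup_down hr hN hd hT
    exact ⟨S, hS, funext hj⟩
end
end

section
/- Let r ≥ 2, N ≥ r − 1, d ≥ 1, and let (χ(S_1),…,χ(S_r)) be a fundamental lineup of length r of the bosonic point configuration of N-multisubsets of [d]. Then: (i) for every k and every j ∈ [d] with S_k(j) > 0, one has j ≤ r; (ii) for every k, the multiplicity of 1 satisfies S_k(1) ≥ N − r + 1. -/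
noncomputable section

/-- Vector of an `N`-multisubset `S : Fin d → ℕ` of `[d]`. -/
def chiB {d : ℕ} (S : Fin d → ℕ) : Fin d → ℝ := fun i => (S i : ℝ)

/-- `(χ(S 0),…,χ(S (r-1)))` is a fundamental lineup of length `r` of the
bosonic point configuration of `N`-multisubsets of `[d]`. -/
def IsFundBosonicLineup (d N : ℕ) {r : ℕ} (S : Fin r → (Fin d → ℕ)) : Prop :=
  Function.Injective S ∧ (∀ k, ∑ i, S k i = N) ∧
  ∃ y : Fin d → ℝ, Fund y ∧
    (∀ k l : Fin r, k < l → dotp y (chiB (S l)) < dotp y (chiB (S k))) ∧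
    (∀ T : Fin d → ℕ, (∑ i, T i = N) → (∀ k, T ≠ S k) →
      ∀ k, dotp y (chiB T) < dotp y (chiB (S k)))

/-- Stabilization of bosonic lineups.  Elements of `Fin d` are identified with
`{1,…,d}` via `j ↦ (j : ℕ) + 1`: (i) the support of each `S k` is contained in
`{1,…,r}`; (ii) the multiplicity of `1` in each `S k` is at least `N - r + 1`. -/
theorem bosonic_lineup_stabilization
    {d N r : ℕ} (hr : 2 ≤ r) (hN : r - 1 ≤ N) (hd : 1 ≤ d)
    (S : Fin r → (Fin d → ℕ)) (hS : IsFundBosonicLineup d N S) :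
    (∀ k, ∀ j : Fin d, 0 < S k j → (j : ℕ) + 1 ≤ r) ∧
    (∀ k, N + 1 - r ≤ S k ⟨0, by omega⟩) := by
  obtain ⟨hinj, hsum, y, hy, hord, hmax⟩ := hS
  -- the move lemma
  have hmove : ∀ (k : Fin r) (j i : Fin d), i < j → 0 < S k j →
      ∃ l : Fin r, l < k ∧
        S l = Function.update (Function.update (S k) j (S k j - 1)) i (S k i + 1) := by
    intro k j i hij hj
    set T := Function.update (Function.update (S k) j (S k j - 1)) i (S k i + 1) with hT
    have hne : i ≠ j := ne_of_lt hij
    have hjm : j ∈ Finset.univ.erase i := Finset.mem_erase.2 ⟨hne.symm, Finset.mem_univ j⟩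
    have hTi : T i = S k i + 1 := by simp [hT]
    have hTj : T j = S k j - 1 := by
      simp [hT, Function.update_of_ne hne.symm, Function.update_self]
    have hTx : ∀ x ∈ (Finset.univ.erase i).erase j, T x = S k x := by
      intro x hx
      have hxj := (Finset.mem_erase.1 hx).1
      have hxi := (Finset.mem_erase.1 (Finset.mem_erase.1 hx).2).1
      simp [hT, Function.update_of_ne hxi, Function.update_of_ne hxj]
    have hsplitN : ∀ f : Fin d → ℕ,
        (∑ x, f x) = f i + (f j + ∑ x ∈ (Finset.univ.erase i).erase j, f x) := by
      intro f
      rw [← Finset.add_sum_erase _ f (Finset.mem_univ i), ← Finset.add_sum_erase _ f hjm]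
    have hsplitR : ∀ f : Fin d → ℕ,
        dotp y (chiB f) = y i * (f i : ℝ) +
          (y j * (f j : ℝ) + ∑ x ∈ (Finset.univ.erase i).erase j, y x * (f x : ℝ)) := by
      intro f
      show (∑ x, y x * (f x : ℝ)) = _
      rw [← Finset.add_sum_erase _ (fun x => y x * (f x : ℝ)) (Finset.mem_univ i),
        ← Finset.add_sum_erase _ (fun x => y x * (f x : ℝ)) hjm]
    have hrest : ∑ x ∈ (Finset.univ.erase i).erase j, T x
        = ∑ x ∈ (Finset.univ.erase i).erase j, S k x :=
      Finset.sum_congr rfl hTx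
    have hrestR : ∑ x ∈ (Finset.univ.erase i).erase j, y x * (T x : ℝ)
        = ∑ x ∈ (Finset.univ.erase i).erase j, y x * (S k x : ℝ) :=
      Finset.sum_congr rfl fun x hx => by rw [hTx x hx]
    have hsumT : ∑ x, T x = N := by
      have h1 := hsplitN T
      have h2 := hsplitN (S k)
      rw [hsum k] at h2
      rw [hTi, hTj, hrest] at h1
      omega
    have hdot : dotp y (chiB (S k)) ≤ dotp y (chiB T) := by
      have h1 := hsplitR T
      have h2 := hsplitR (S k)
      have hcast : ((S k j - 1 : ℕ) : ℝ) = (S k j : ℝ) - 1 := by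
        rw [Nat.cast_sub hj, Nat.cast_one]
      rw [hTi, hTj, hrestR, hcast] at h1
      have hyij : y j ≤ y i := hy i j (le_of_lt hij)
      push_cast at h1
      linarith [h1, h2]
    have hTne : T ≠ S k := by
      intro h
      have := congrFun h j
      rw [hTj] at this
      omega
    by_cases hex : ∃ l, T = S l
    · obtain ⟨l, hl⟩ := hex
      refine ⟨l, ?_, hl.symm⟩
      rcases lt_trichotomy l k with h | h | h
      · exact h
      · exact absurd (h ▸ hl) hTne
      · exact absurd (hord k l h) (not_lt.2 (hl ▸ hdot))
    · push_neg at hex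
      exact absurd (hmax T hsumT hex k) (not_lt.2 hdot)
  -- claim 1: support of S k is contained in {0, …, k}
  have claim1 : ∀ n : ℕ, ∀ k : Fin r, (k : ℕ) ≤ n → ∀ j : Fin d, 0 < S k j → (j : ℕ) ≤ (k : ℕ) := by
    intro n
    induction n with
    | zero =>
      intro k hk j hj
      by_contra hcon
      push_neg at hcon
      have hj1 : 1 ≤ (j : ℕ) := by omega
      set i : Fin d := ⟨(j : ℕ) - 1, by omega⟩ with hi
      have hij : i < j := by
        simp only [Fin.lt_def, hi]; omega
      obtain ⟨l, hl, -⟩ := hmove k j i hij hj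
      have : (l : ℕ) < (k : ℕ) := hl
      omega
    | succ n ih =>
      intro k hk j hj
      by_contra hcon
      push_neg at hcon
      have hj1 : 1 ≤ (j : ℕ) := by omega
      set i : Fin d := ⟨(j : ℕ) - 1, by omega⟩ with hi
      have hij : i < j := by
        simp only [Fin.lt_def, hi]; omega
      obtain ⟨l, hl, hSl⟩ := hmove k j i hij hj
      have hlk : (l : ℕ) < (k : ℕ) := hl
      have hne : i ≠ j := ne_of_lt hij
      have hSli : 0 < S l i := by
        rw [hSl]; simp
      have := ih l (by omega) i hSli
      simp only [hi] at this
      omega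
  -- claim 2: mass outside coordinate 0 of S k is at most k
  have z : Fin d := ⟨0, by omega⟩
  have claim2 : ∀ n : ℕ, ∀ k : Fin r, (k : ℕ) ≤ n →
      ∑ x ∈ Finset.univ.erase (⟨0, by omega⟩ : Fin d), S k x ≤ (k : ℕ) := by
    intro n
    induction n with
    | zero =>
      intro k hk
      by_contra hcon
      push_neg at hcon
      have hpos : ∑ x ∈ Finset.univ.erase (⟨0, by omega⟩ : Fin d), S k x ≠ 0 := by omega
      obtain ⟨j, hjmem, hjpos⟩ := Finset.exists_ne_zero_of_sum_ne_zero hpos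
      have hjz : j ≠ (⟨0, by omega⟩ : Fin d) := (Finset.mem_erase.1 hjmem).1
      have hzj : (⟨0, by omega⟩ : Fin d) < j := by
        simp only [Fin.lt_def]
        have : (j : ℕ) ≠ 0 := fun h => hjz (Fin.ext h)
        omega
      obtain ⟨l, hl, -⟩ := hmove k j _ hzj (Nat.pos_of_ne_zero hjpos)
      have : (l : ℕ) < (k : ℕ) := hl
      omega
    | succ n ih =>
      intro k hk
      by_cases hzero : ∑ x ∈ Finset.univ.erase (⟨0, by omega⟩ : Fin d), S k x = 0
      · omega
      obtain ⟨j, hjmem, hjpos⟩ := Finset.exists_ne_zero_of_sum_ne_zero hzero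
      have hjz : j ≠ (⟨0, by omega⟩ : Fin d) := (Finset.mem_erase.1 hjmem).1
      have hzj : (⟨0, by omega⟩ : Fin d) < j := by
        simp only [Fin.lt_def]
        have : (j : ℕ) ≠ 0 := fun h => hjz (Fin.ext h)
        omega
      obtain ⟨l, hl, hSl⟩ := hmove k j _ hzj (Nat.pos_of_ne_zero hjpos)
      have hlk : (l : ℕ) < (k : ℕ) := hl
      have hIH := ih l (by omega)
      -- sum over erase 0 of S l equals that of S k minus 1
      have hsum_eq : ∑ x ∈ Finset.univ.erase (⟨0, by omega⟩ : Fin d), S l x + 1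
          = ∑ x ∈ Finset.univ.erase (⟨0, by omega⟩ : Fin d), S k x := by
        have h1 : ∑ x ∈ Finset.univ.erase (⟨0, by omega⟩ : Fin d), S l x
            = ∑ x ∈ Finset.univ.erase (⟨0, by omega⟩ : Fin d),
                Function.update (S k) j (S k j - 1) x := by
          refine Finset.sum_congr rfl fun x hx => ?_
          rw [hSl]
          exact Function.update_of_ne (Finset.mem_erase.1 hx).1 _ _
        have h2 : ∑ x ∈ Finset.univ.erase (⟨0, by omega⟩ : Fin d),
              Function.update (S k) j (S k j - 1) x
            = (S k j - 1) + ∑ x ∈ (Finset.univ.erase (⟨0, by omega⟩ : Fin d)).erase j, S k x := by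
          rw [← Finset.add_sum_erase _ _ hjmem]
          congr 1
          · simp
          · refine Finset.sum_congr rfl fun x hx => ?_
            exact Function.update_of_ne (Finset.mem_erase.1 hx).1 _ _
        have h3 : ∑ x ∈ Finset.univ.erase (⟨0, by omega⟩ : Fin d), S k x
            = S k j + ∑ x ∈ (Finset.univ.erase (⟨0, by omega⟩ : Fin d)).erase j, S k x :=
          (Finset.add_sum_erase _ _ hjmem).symm
        have hjpos' : 0 < S k j := Nat.pos_of_ne_zero hjpos
        omega
      omega
  constructor
  · intro k j hj
    have := claim1 (k : ℕ) k le_rfl j hj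
    have hk := k.isLt
    omega
  · intro k
    have h2 := claim2 (k : ℕ) k le_rfl
    have h3 : S k (⟨0, by omega⟩ : Fin d) +
        ∑ x ∈ Finset.univ.erase (⟨0, by omega⟩ : Fin d), S k x = N := by
      rw [Finset.add_sum_erase _ _ (Finset.mem_univ _)]
      exact hsum k
    have hk := k.isLt
    omega
end
end

section
/- Let N ≥ 1, d ≥ 2, and let w = (w_1,…,w_{N+1}) satisfy w_1 > w_2 > ⋯ > w_{N+1} > 0 and Σ_k w_k = 1. If (χ(S_1),…,χ(S_{N+1})) is a fundamental lineup of length N+1 of the bosonic point configuration of N-multisubsets of [d], then the occupation vector o = Σ_{j=1}^{N+1} w_j χ(S_j) satisfies o_1 > o_2, i.e. its first coordinate is strictly larger than its second. -/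
noncomputable section

theorem bosonic_aux {d N : ℕ} (hN : 1 ≤ N)
    (i0 i1 : Fin d) (hne : i0 ≠ i1) (hmin : ∀ i, i0 ≤ i)
    (w : Fin (N + 1) → ℝ) (hww : StrictAnti w) (hwpos : ∀ k, 0 < w k)
    (S : Fin (N + 1) → (Fin d → ℕ)) (hS : IsFundBosonicLineup d N S) :
    (∑ j, w j * (S j i1 : ℝ)) < ∑ j, w j * (S j i0 : ℝ) := by
  classical
  obtain ⟨hinj, hsum, y, hy, hlin, hout⟩ := hS
  have hymin : ∀ i, y i ≤ y i0 := fun i => hy i0 i (hmin i)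
  have hle : ∀ T : Fin d → ℕ, (∑ i, T i = N) → dotp y (chiB T) ≤ (N : ℝ) * y i0 := by
    intro T hT
    calc dotp y (chiB T) ≤ ∑ i, y i0 * (T i : ℝ) := by
          apply Finset.sum_le_sum
          intro i _
          exact mul_le_mul_of_nonneg_right (hymin i) (Nat.cast_nonneg _)
      _ = y i0 * ∑ i, (T i : ℝ) := by rw [Finset.mul_sum]
      _ = (N:ℝ) * y i0 := by rw [← Nat.cast_sum, hT]; ring
  set A : Fin d → ℕ := fun i => if i = i0 then N else 0 with hA
  have hAsum : ∑ i, A i = N := by simp [hA]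
  have hAdot : dotp y (chiB A) = (N:ℝ) * y i0 := by
    simp [dotp, chiB, hA, apply_ite (Nat.cast : ℕ → ℝ), mul_ite, Finset.sum_ite_eq']
    ring
  have hmax : ∀ T : Fin d → ℕ, (∑ i, T i = N) →
      dotp y (chiB (S 0)) ≤ dotp y (chiB T) → T = S 0 := by
    intro T hT hge
    by_cases h : ∀ k, T ≠ S k
    · exact absurd (hout T hT h 0) (not_lt.2 hge)
    · push_neg at h
      obtain ⟨k, hk⟩ := h
      rcases eq_or_ne k 0 with rfl | hk0
      · exact hk
      · have h0k : (0 : Fin (N+1)) < k := Fin.pos_of_ne_zero hk0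
        have hl := hlin 0 k h0k
        rw [← hk] at hl
        exact absurd hge (not_le.2 hl)
  have hS0 : S 0 = A := (hmax A hAsum (by rw [hAdot]; exact hle (S 0) (hsum 0))).symm
  have hy01 : y i1 < y i0 := by
    rcases lt_or_eq_of_le (hymin i1) with h | h
    · exact h
    · exfalso
      set B : Fin d → ℕ := fun i => if i = i1 then N else 0 with hB
      have hBsum : ∑ i, B i = N := by simp [hB]
      have hBdot : dotp y (chiB B) = (N:ℝ) * y i0 := by
        simp [dotp, chiB, hB, apply_ite (Nat.cast : ℕ → ℝ), mul_ite, Finset.sum_ite_eq']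
        rw [h]; ring
      have hBeq : B = S 0 := hmax B hBsum (by rw [hBdot]; exact hle (S 0) (hsum 0))
      have hAB : A = B := by rw [← hS0, ← hBeq]
      have h1 : A i1 = B i1 := by rw [hAB]
      simp [hA, hB, Ne.symm hne] at h1
      omega
  -- the swap map
  set σ : (Fin d → ℕ) → (Fin d → ℕ) := fun T => T ∘ (Equiv.swap i0 i1) with hσ
  have hσ0 : ∀ T : Fin d → ℕ, σ T i0 = T i1 := by intro T; simp [hσ]
  have hσ1 : ∀ T : Fin d → ℕ, σ T i1 = T i0 := by intro T; simp [hσ]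
  have hσsum : ∀ T : Fin d → ℕ, ∑ i, σ T i = ∑ i, T i := by
    intro T; exact Equiv.sum_comp (Equiv.swap i0 i1) T
  have hσinj : Function.Injective σ := by
    intro T T' h
    funext i
    have h2 := congrFun h ((Equiv.swap i0 i1) i)
    simpa [hσ, Equiv.swap_apply_self] using h2
  have hσdot : ∀ T : Fin d → ℕ,
      dotp y (chiB (σ T)) = dotp y (chiB T) + (y i0 - y i1) * ((T i1:ℝ) - (T i0:ℝ)) := by
    intro T
    have key : dotp y (chiB (σ T)) - dotp y (chiB T)
        = ∑ i, (y i * ((σ T i : ℝ)) - y i * (T i : ℝ)) := by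
      rw [Finset.sum_sub_distrib]; rfl
    have h2 : ∑ i, (y i * ((σ T i : ℝ)) - y i * (T i : ℝ))
        = ∑ i ∈ ({i0, i1} : Finset (Fin d)), (y i * ((σ T i : ℝ)) - y i * (T i : ℝ)) := by
      symm
      apply Finset.sum_subset (Finset.subset_univ _)
      intro i _ hi
      simp only [Finset.mem_insert, Finset.mem_singleton, not_or] at hi
      have h3 : σ T i = T i := by
        simp [hσ, Equiv.swap_apply_of_ne_of_ne hi.1 hi.2]
      rw [h3]; ring
    rw [h2, Finset.sum_pair hne, hσ0, hσ1] at key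
    linear_combination key
  have hphi : ∀ j : Fin (N+1), S j i0 < S j i1 → ∃ k, k < j ∧ S k = σ (S j) := by
    intro j hj
    have hgt : dotp y (chiB (S j)) < dotp y (chiB (σ (S j))) := by
      rw [hσdot]
      have h1 : (0:ℝ) < (y i0 - y i1) := by linarith
      have h2 : (0:ℝ) < ((S j i1:ℝ) - (S j i0:ℝ)) := by
        have := hj
        have : (S j i0 : ℝ) < (S j i1 : ℝ) := by exact_mod_cast hj
        linarith
      nlinarith
    by_cases h : ∀ k, σ (S j) ≠ S k
    · have := hout (σ (S j)) (by rw [hσsum]; exact hsum j) h j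
      linarith
    · push_neg at h
      obtain ⟨k, hk⟩ := h
      refine ⟨k, ?_, hk.symm⟩
      rcases lt_trichotomy k j with h' | h' | h'
      · exact h'
      · exfalso; subst h'; rw [hk] at hgt; exact lt_irrefl _ hgt
      · exfalso
        have hl := hlin j k h'
        rw [← hk] at hl
        linarith
  -- the main counting argument
  set f : Fin (N+1) → ℝ := fun j => w j * ((S j i0 : ℝ) - (S j i1 : ℝ)) with hf
  set phi : Fin (N+1) → Fin (N+1) :=
    fun j => if h : S j i0 < S j i1 then (hphi j h).choose else j with hphidef
  have hphi_lt : ∀ j, S j i0 < S j i1 → phi j < j := by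
    intro j h
    simp only [hphidef, dif_pos h]
    exact (hphi j h).choose_spec.1
  have hphi_S : ∀ j, S j i0 < S j i1 → S (phi j) = σ (S j) := by
    intro j h
    simp only [hphidef, dif_pos h]
    exact (hphi j h).choose_spec.2
  set P : Finset (Fin (N+1)) := Finset.univ.filter (fun j => S j i1 < S j i0) with hP
  set Ng : Finset (Fin (N+1)) := Finset.univ.filter (fun j => S j i0 < S j i1) with hNgdef
  have hsplit : ∑ j, f j = ∑ j ∈ P, f j + ∑ j ∈ Ng, f j := by
    rw [← Finset.sum_filter_add_sum_filter_not Finset.univ (fun j => S j i1 < S j i0) f]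
    congr 1
    symm
    apply Finset.sum_subset
    · intro j hj
      simp only [hNgdef, Finset.mem_filter, Finset.mem_univ, true_and] at hj
      simp only [Finset.mem_filter, Finset.mem_univ, true_and]
      omega
    · intro j hj hjn
      simp only [Finset.mem_filter, Finset.mem_univ, true_and] at hj
      simp only [hNgdef, Finset.mem_filter, Finset.mem_univ, true_and] at hjn
      have : S j i0 = S j i1 := by omega
      simp [hf, this]
  have hfP : ∀ j ∈ P, 0 < f j := by
    intro j hj
    simp only [hP, Finset.mem_filter, Finset.mem_univ, true_and] at hj
    have : (S j i1 : ℝ) < (S j i0 : ℝ) := by exact_mod_cast hj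
    have := hwpos j
    simp only [hf]
    nlinarith
  have h0P : (0 : Fin (N+1)) ∈ P := by
    simp only [hP, Finset.mem_filter, Finset.mem_univ, true_and, hS0, hA]
    simp [Ne.symm hne]
    omega
  have himg : Ng.image phi ⊆ P := by
    intro k hk
    simp only [Finset.mem_image] at hk
    obtain ⟨j, hj, rfl⟩ := hk
    simp only [hNgdef, Finset.mem_filter, Finset.mem_univ, true_and] at hj
    have h1 := hphi_S j hj
    simp only [hP, Finset.mem_filter, Finset.mem_univ, true_and]
    rw [h1, hσ0, hσ1]
    exact hj
  have himage : ∑ j ∈ Ng, f (phi j) = ∑ k ∈ Ng.image phi, f k := by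
    rw [Finset.sum_image]
    intro a ha b hb hab
    simp only [hNgdef, Finset.mem_coe, Finset.mem_filter, Finset.mem_univ, true_and] at ha hb
    have h1 : S (phi a) = σ (S a) := hphi_S a ha
    have h2 : S (phi b) = σ (S b) := hphi_S b hb
    have : σ (S a) = σ (S b) := by rw [← h1, ← h2, hab]
    exact hinj (hσinj this)
  have key : (0:ℝ) < ∑ j, f j := by
    by_cases hNg : Ng.Nonempty
    · have h1 : - ∑ j ∈ Ng, f (phi j) < ∑ j ∈ Ng, f j := by
        rw [← Finset.sum_neg_distrib]
        apply Finset.sum_lt_sum_of_nonempty hNg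
        intro j hj
        simp only [hNgdef, Finset.mem_filter, Finset.mem_univ, true_and] at hj
        have hlt := hphi_lt j hj
        have hw : w j < w (phi j) := hww hlt
        have hSe := hphi_S j hj
        have e0 : (S (phi j) i0 : ℝ) = (S j i1 : ℝ) := by rw [hSe, hσ0]
        have e1 : (S (phi j) i1 : ℝ) = (S j i0 : ℝ) := by rw [hSe, hσ1]
        simp only [hf, e0, e1]
        have hc : (S j i0 : ℝ) < (S j i1 : ℝ) := by exact_mod_cast hj
        nlinarith [hwpos j]
      have h2 : ∑ j ∈ Ng, f (phi j) ≤ ∑ j ∈ P, f j := by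
        rw [himage]
        apply Finset.sum_le_sum_of_subset_of_nonneg himg
        intro k hk _
        exact le_of_lt (hfP k hk)
      rw [hsplit]
      linarith
    · rw [Finset.not_nonempty_iff_eq_empty] at hNg
      rw [hsplit, hNg, Finset.sum_empty, add_zero]
      apply Finset.sum_pos' (fun j hj => le_of_lt (hfP j hj)) ⟨0, h0P, hfP 0 h0P⟩
  have hfs : ∑ j, f j = (∑ j, w j * (S j i0:ℝ)) - ∑ j, w j * (S j i1:ℝ) := by
    rw [← Finset.sum_sub_distrib]
    apply Finset.sum_congr rfl
    intro j _
    simp only [hf]; ring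
  linarith [key, hfs ▸ key]

/-- For a bosonic fundamental lineup of length `N+1`, the first coordinate of
the occupation vector is strictly larger than its second coordinate. -/
theorem bosonic_occupation_first_gt_second
    {d N : ℕ} (hN : 1 ≤ N) (hd : 2 ≤ d)
    (w : Fin (N + 1) → ℝ) (hww : StrictAnti w) (hwpos : ∀ k, 0 < w k)
    (hwsum : ∑ k, w k = 1)
    (S : Fin (N + 1) → (Fin d → ℕ)) (hS : IsFundBosonicLineup d N S) :
    (∑ j, w j * (S j ⟨1, by omega⟩ : ℝ)) < ∑ j, w j * (S j ⟨0, by omega⟩ : ℝ) := by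
  exact bosonic_aux hN ⟨0, by omega⟩ ⟨1, by omega⟩
    (by simp [Fin.ext_iff]) (fun i => by simp [Fin.le_def])
    w hww hwpos S hS
end
end
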